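/- arXiv:1605.07554 — 7 statements merged into one kernel-verified Lean document; each statement's English description precedes it below -/
import Mathlib

section
/- Let s ≥ 0 be real and let a, b, c, d, f, g, h : I → ℝ be continuous functions on an open interval I. Suppose μ : I → (0,∞) and α, β, γ, δ, ε, κ : I → ℝ are differentiable and satisfy on I the Riccati-type system: α' + b + 2cα + 4aα² = 0; β' + (c + 4aα)β = 0; γ' + aβ² = 0; δ' + (c + 4aα)δ = f + 2αg; ε' = (g − 2aδ)β; κ' = gδ − aδ² − h/μ^s; together with the relation μ' = 2μ(2aα + d). Then for every y ∈ ℝ the function ψ_y(x,t) = μ(t)^{−1/2} · exp(i(α(t)x² + β(t)xy + γ(t)y² + δ(t)x + ε(t)y + κ(t))) is C¹ in t and C² in x and satisfies at every (x,t) ∈ ℝ × I the variable-coefficient nonlinear Schrödinger equation i·∂ψ/∂t = −a(t)·∂²ψ/∂x² + (b(t)x² − f(t)x)ψ − i·c(t)·x·∂ψ/∂x − i·d(t)·ψ + i·g(t)·∂ψ/∂x + h(t)·|ψ|^{2s}·ψ. -/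
/-!
Write `ψ = A e^{iS}` with `A = μ^{-1/2}`. Dividing the equation by `ψ`, its imaginary part is
`A'/A = -(2aα + d)`, which is the relation imposed on `μ`, and its real part is the
Hamilton–Jacobi equation `∂ₜS = -(a (∂ₓS)² + b x² - f x + c x ∂ₓS - g ∂ₓS + h |ψ|^{2s})`.
Since `|ψ|^{2s} = μ^{-s}` does not depend on `x`, both sides are quadratic polynomials in `(x, y)`,
and comparing coefficients gives exactly the Riccati system; the nonlinearity only enters the
constant term, i.e. the equation for `κ`.
-/

open Complex

theorem contDiffOn_one_of_hasDerivAt {F : Type*} [NormedAddCommGroup F] [NormedSpace ℝ F]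
    {f f' : ℝ → F} {s : Set ℝ} (hs : IsOpen s) (hf : ∀ x ∈ s, HasDerivAt f (f' x) x)
    (hf' : ContinuousOn f' s) : ContDiffOn ℝ 1 f s := by
  rw [contDiffOn_one_iff_derivWithin hs.uniqueDiffOn]
  refine ⟨fun x hx => (hf x hx).differentiableAt.differentiableWithinAt, hf'.congr ?_⟩
  intro x hx
  rw [derivWithin_of_isOpen hs hx, (hf x hx).deriv]

theorem HasDerivAt.ofReal_mul_cexp_I_mul {A S : ℝ → ℝ} {A' S' t : ℝ} (hA : HasDerivAt A A' t)
    (hS : HasDerivAt S S' t) :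
    HasDerivAt (fun τ => (A τ : ℂ) * cexp (I * S τ))
      ((A' + I * S' * A t) * cexp (I * S t)) t :=
  (hA.ofReal_comp.fun_mul (hS.ofReal_comp.const_mul I).cexp).congr_deriv (by ring)

theorem hasDerivAt_rpow_neg_half_of_hasDerivAt {μ : ℝ → ℝ} {k t : ℝ}
    (hμ : HasDerivAt μ (2 * μ t * k) t) (hpos : 0 < μ t) :
    HasDerivAt (fun τ => μ τ ^ (-(1 / 2 : ℝ))) (-k * μ t ^ (-(1 / 2 : ℝ))) t := by
  refine ((Real.hasDerivAt_rpow_const (Or.inl hpos.ne')).comp t hμ).congr_deriv ?_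
  rw [Real.rpow_sub hpos, Real.rpow_one]
  field_simp

namespace NLS

noncomputable def quadPhase (α β γ δ ε κ : ℝ → ℝ) (y x t : ℝ) : ℝ :=
  α t * x ^ 2 + β t * x * y + γ t * y ^ 2 + δ t * x + ε t * y + κ t

noncomputable def ansatz (μ α β γ δ ε κ : ℝ → ℝ) (y x t : ℝ) : ℂ :=
  ((μ t ^ (-(1 / 2 : ℝ)) : ℝ) : ℂ) * cexp (I * quadPhase α β γ δ ε κ y x t)

section

variable {μ α β γ δ ε κ : ℝ → ℝ} {y x t : ℝ}

theorem hasDerivAt_quadPhase_space :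
    HasDerivAt (fun x' => quadPhase α β γ δ ε κ y x' t) (2 * α t * x + β t * y + δ t) x := by
  have hx2 : HasDerivAt (fun x' : ℝ => x' ^ 2) (2 * x) x := by
    simpa using hasDerivAt_pow 2 x
  exact (((((hx2.const_mul (α t)).add (((hasDerivAt_id x).const_mul (β t)).mul_const y)).add_const
    (γ t * y ^ 2)).add ((hasDerivAt_id x).const_mul (δ t))).add_const (ε t * y)).add_const
    (κ t) |>.congr_deriv (by ring)

theorem hasDerivAt_quadPhase_time {a b c f g h : ℝ → ℝ} {s : ℝ}
    (hα : HasDerivAt α (-(b t + 2 * c t * α t + 4 * a t * (α t) ^ 2)) t)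
    (hβ : HasDerivAt β (-((c t + 4 * a t * α t) * β t)) t)
    (hγ : HasDerivAt γ (-(a t * (β t) ^ 2)) t)
    (hδ : HasDerivAt δ (f t + 2 * α t * g t - (c t + 4 * a t * α t) * δ t) t)
    (hε : HasDerivAt ε ((g t - 2 * a t * δ t) * β t) t)
    (hκ : HasDerivAt κ (g t * δ t - a t * (δ t) ^ 2 - h t / (μ t) ^ s) t) :
    HasDerivAt (fun τ => quadPhase α β γ δ ε κ y x τ)
      (-(a t * (2 * α t * x + β t * y + δ t) ^ 2 + b t * x ^ 2 - f t * x
        + c t * x * (2 * α t * x + β t * y + δ t) - g t * (2 * α t * x + β t * y + δ t)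
        + h t / μ t ^ s)) t :=
  ((((((hα.mul_const (x ^ 2)).add ((hβ.mul_const x).mul_const y)).add
    (hγ.mul_const (y ^ 2))).add (hδ.mul_const x)).add (hε.mul_const y)).add hκ).congr_deriv
    (by ring)

theorem hasDerivAt_ansatz_space :
    HasDerivAt (fun x' => ansatz μ α β γ δ ε κ y x' t)
      (I * (2 * α t * x + β t * y + δ t : ℝ) * ansatz μ α β γ δ ε κ y x t) x := by
  refine ((hasDerivAt_const x (μ t ^ (-(1 / 2 : ℝ)))).ofReal_mul_cexp_I_mul
    hasDerivAt_quadPhase_space).congr_deriv ?_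
  unfold ansatz
  push_cast
  ring

theorem deriv_deriv_ansatz_space :
    deriv (fun x' => deriv (fun x'' => ansatz μ α β γ δ ε κ y x'' t) x') x
      = (2 * α t * I - (2 * α t * x + β t * y + δ t : ℝ) ^ 2) * ansatz μ α β γ δ ε κ y x t := by
  have hgrad : HasDerivAt (fun x' : ℝ => I * ((2 * α t * x' + β t * y + δ t : ℝ) : ℂ))
      (I * (2 * α t : ℝ)) x :=
    ((((hasDerivAt_id x).const_mul (2 * α t)).add_const (β t * y)).add_const
      (δ t)).ofReal_comp.const_mul I |>.congr_deriv (by simp)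
  rw [funext fun x' => hasDerivAt_ansatz_space.deriv,
    (hgrad.fun_mul hasDerivAt_ansatz_space).deriv]
  push_cast
  linear_combination (2 * α t * x + β t * y + δ t) ^ 2 * ansatz μ α β γ δ ε κ y x t * I_sq

theorem contDiff_ansatz_space :
    ContDiff ℝ 2 (fun x => ansatz μ α β γ δ ε κ y x t) := by
  have : ContDiff ℝ 2 (fun x => quadPhase α β γ δ ε κ y x t) := by
    unfold quadPhase
    fun_prop
  exact contDiff_const.mul (contDiff_exp.comp (contDiff_const.mul (ofRealCLM.contDiff.comp this)))

theorem norm_ansatz (hpos : 0 < μ t) :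
    ‖ansatz μ α β γ δ ε κ y x t‖ = μ t ^ (-(1 / 2 : ℝ)) := by
  rw [ansatz, norm_mul, norm_exp_I_mul_ofReal, mul_one, norm_real, Real.norm_eq_abs,
    abs_of_pos (Real.rpow_pos_of_pos hpos _)]

theorem norm_ansatz_rpow (hpos : 0 < μ t) (s : ℝ) :
    ‖ansatz μ α β γ δ ε κ y x t‖ ^ (2 * s) = (μ t ^ s)⁻¹ := by
  rw [norm_ansatz hpos, ← Real.rpow_mul hpos.le, ← Real.rpow_neg hpos.le]
  ring_nf

theorem ansatz_satisfies_nls {a b c d f g h : ℝ → ℝ} {s : ℝ} (hpos : 0 < μ t)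
    (hα : HasDerivAt α (-(b t + 2 * c t * α t + 4 * a t * (α t) ^ 2)) t)
    (hβ : HasDerivAt β (-((c t + 4 * a t * α t) * β t)) t)
    (hγ : HasDerivAt γ (-(a t * (β t) ^ 2)) t)
    (hδ : HasDerivAt δ (f t + 2 * α t * g t - (c t + 4 * a t * α t) * δ t) t)
    (hε : HasDerivAt ε ((g t - 2 * a t * δ t) * β t) t)
    (hκ : HasDerivAt κ (g t * δ t - a t * (δ t) ^ 2 - h t / (μ t) ^ s) t)
    (hμ : HasDerivAt μ (2 * μ t * (2 * a t * α t + d t)) t)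
    {ψ : ℝ → ℝ → ℂ} (hψ : ψ = ansatz μ α β γ δ ε κ y) :
    I * deriv (fun τ => ψ x τ) t =
      -(a t : ℂ) * deriv (fun x' => deriv (fun x'' => ψ x'' t) x') x
        + ((b t : ℂ) * (x : ℂ) ^ 2 - (f t : ℂ) * (x : ℂ)) * ψ x t
        - I * (c t : ℂ) * (x : ℂ) * deriv (fun x' => ψ x' t) x
        - I * (d t : ℂ) * ψ x t
        + I * (g t : ℂ) * deriv (fun x' => ψ x' t) x
        + (h t : ℂ) * ((‖ψ x t‖ ^ (2 * s) : ℝ) : ℂ) * ψ x t := by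
  subst hψ
  have hψt : HasDerivAt (fun τ => ansatz μ α β γ δ ε κ y x τ) _ t :=
    (hasDerivAt_rpow_neg_half_of_hasDerivAt hμ hpos).ofReal_mul_cexp_I_mul
      (hasDerivAt_quadPhase_time (x := x) (y := y) hα hβ hγ hδ hε hκ)
  rw [hψt.deriv, deriv_deriv_ansatz_space, hasDerivAt_ansatz_space.deriv,
    norm_ansatz_rpow hpos, div_eq_mul_inv]
  simp only [ansatz]
  push_cast
  ring_nf
  rw [I_sq]
  ring

end

theorem contDiffOn_ansatz_time {I : Set ℝ} (hI : IsOpen I) {a b c d f g h : ℝ → ℝ}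
    {μ α β γ δ ε κ : ℝ → ℝ} {s : ℝ}
    (ha : ContinuousOn a I) (hb : ContinuousOn b I) (hc : ContinuousOn c I)
    (hd : ContinuousOn d I) (hf : ContinuousOn f I) (hg : ContinuousOn g I)
    (hh : ContinuousOn h I)
    (hpos : ∀ t ∈ I, 0 < μ t)
    (hα : ∀ t ∈ I, HasDerivAt α (-(b t + 2 * c t * α t + 4 * a t * (α t) ^ 2)) t)
    (hβ : ∀ t ∈ I, HasDerivAt β (-((c t + 4 * a t * α t) * β t)) t)
    (hγ : ∀ t ∈ I, HasDerivAt γ (-(a t * (β t) ^ 2)) t)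
    (hδ : ∀ t ∈ I, HasDerivAt δ (f t + 2 * α t * g t - (c t + 4 * a t * α t) * δ t) t)
    (hε : ∀ t ∈ I, HasDerivAt ε ((g t - 2 * a t * δ t) * β t) t)
    (hκ : ∀ t ∈ I, HasDerivAt κ (g t * δ t - a t * (δ t) ^ 2 - h t / (μ t) ^ s) t)
    (hμ : ∀ t ∈ I, HasDerivAt μ (2 * μ t * (2 * a t * α t + d t)) t) (y x : ℝ) :
    ContDiffOn ℝ 1 (fun t => ansatz μ α β γ δ ε κ y x t) I := by
  have hμc := HasDerivAt.continuousOn hμ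
  have hαc := HasDerivAt.continuousOn hα
  have hβc := HasDerivAt.continuousOn hβ
  have hδc := HasDerivAt.continuousOn hδ
  have hμs : ContinuousOn (fun t => h t / μ t ^ s) I :=
    hh.div (hμc.rpow_const fun t ht => Or.inl (hpos t ht).ne')
      fun t ht => (Real.rpow_pos_of_pos (hpos t ht) s).ne'
  have hμ1 := contDiffOn_one_of_hasDerivAt hI hμ (by fun_prop)
  have hα1 := contDiffOn_one_of_hasDerivAt hI hα (by fun_prop)
  have hβ1 := contDiffOn_one_of_hasDerivAt hI hβ (by fun_prop)
  have hγ1 := contDiffOn_one_of_hasDerivAt hI hγ (by fun_prop)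
  have hδ1 := contDiffOn_one_of_hasDerivAt hI hδ (by fun_prop)
  have hε1 := contDiffOn_one_of_hasDerivAt hI hε (by fun_prop)
  have hκ1 := contDiffOn_one_of_hasDerivAt hI hκ (by fun_prop)
  have hS : ContDiffOn ℝ 1 (fun t => quadPhase α β γ δ ε κ y x t) I := by
    unfold quadPhase
    fun_prop
  have hA : ContDiffOn ℝ 1 (fun t => μ t ^ (-(1 / 2 : ℝ))) I :=
    hμ1.rpow_const_of_ne fun t ht => (hpos t ht).ne'
  exact (ofRealCLM.contDiff.comp_contDiffOn hA).mul
    (contDiff_exp.comp_contDiffOn (contDiffOn_const.mul (ofRealCLM.contDiff.comp_contDiffOn hS)))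

end NLS

open NLS

theorem stmt0_general
    (s : ℝ)
    (I : Set ℝ) (hIopen : IsOpen I)
    (a b c d f g h : ℝ → ℝ)
    (ha : ContinuousOn a I) (hb : ContinuousOn b I) (hc : ContinuousOn c I)
    (hd : ContinuousOn d I) (hf : ContinuousOn f I) (hg : ContinuousOn g I)
    (hh : ContinuousOn h I)
    (μ α β γ δ ε κ : ℝ → ℝ)
    (hμpos : ∀ t ∈ I, 0 < μ t)
    (hα : ∀ t ∈ I, HasDerivAt α (-(b t + 2 * c t * α t + 4 * a t * (α t) ^ 2)) t)
    (hβ : ∀ t ∈ I, HasDerivAt β (-((c t + 4 * a t * α t) * β t)) t)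
    (hγ : ∀ t ∈ I, HasDerivAt γ (-(a t * (β t) ^ 2)) t)
    (hδ : ∀ t ∈ I, HasDerivAt δ (f t + 2 * α t * g t - (c t + 4 * a t * α t) * δ t) t)
    (hε : ∀ t ∈ I, HasDerivAt ε ((g t - 2 * a t * δ t) * β t) t)
    (hκ : ∀ t ∈ I, HasDerivAt κ (g t * δ t - a t * (δ t) ^ 2 - h t / (μ t) ^ s) t)
    (hμ : ∀ t ∈ I, HasDerivAt μ (2 * μ t * (2 * a t * α t + d t)) t)
    (y : ℝ)
    (ψ : ℝ → ℝ → ℂ)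
    (hψ : ∀ x t, ψ x t = ((μ t ^ (-(1 / 2 : ℝ)) : ℝ) : ℂ) *
      Complex.exp (Complex.I *
        ((α t * x ^ 2 + β t * x * y + γ t * y ^ 2 + δ t * x + ε t * y + κ t : ℝ) : ℂ))) :
    (∀ x : ℝ, ∀ t ∈ I, ContDiffAt ℝ 1 (fun τ => ψ x τ) t) ∧
    (∀ t ∈ I, ContDiff ℝ 2 (fun x => ψ x t)) ∧
    (∀ x : ℝ, ∀ t ∈ I,
      Complex.I * deriv (fun τ => ψ x τ) t =
        -(a t : ℂ) * deriv (fun x' => deriv (fun x'' => ψ x'' t) x') x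
        + ((b t : ℂ) * (x : ℂ) ^ 2 - (f t : ℂ) * (x : ℂ)) * ψ x t
        - Complex.I * (c t : ℂ) * (x : ℂ) * deriv (fun x' => ψ x' t) x
        - Complex.I * (d t : ℂ) * ψ x t
        + Complex.I * (g t : ℂ) * deriv (fun x' => ψ x' t) x
        + (h t : ℂ) * ((‖ψ x t‖ ^ (2 * s) : ℝ) : ℂ) * ψ x t) := by
  have hψ_eq : ψ = ansatz μ α β γ δ ε κ y := funext₂ hψ
  refine ⟨fun x t ht => ?_, fun t _ => hψ_eq ▸ contDiff_ansatz_space, fun x t ht => ?_⟩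
  · rw [hψ_eq]
    exact (contDiffOn_ansatz_time hIopen ha hb hc hd hf hg hh hμpos hα hβ hγ hδ hε hκ hμ y x
      ).contDiffAt (hIopen.mem_nhds ht)
  · exact ansatz_satisfies_nls (hμpos t ht) (hα t ht) (hβ t ht) (hγ t ht) (hδ t ht) (hε t ht) (hκ t ht)
      (hμ t ht) hψ_eq

/-- Theorem 1(i), explicit-solution part: the ansatz `ψ_y = μ^{-1/2} e^{i S_y}` with
quadratic phase solves the variable-coefficient NLS, provided the coefficients of the
phase satisfy the Riccati-type system in which the nonlinearity is absorbed by `κ`. -/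
theorem stmt0
    (s : ℝ) (hs : 0 ≤ s)
    (I : Set ℝ) (hIopen : IsOpen I) (hIconn : I.OrdConnected)
    (a b c d f g h : ℝ → ℝ)
    (ha : ContinuousOn a I) (hb : ContinuousOn b I) (hc : ContinuousOn c I)
    (hd : ContinuousOn d I) (hf : ContinuousOn f I) (hg : ContinuousOn g I)
    (hh : ContinuousOn h I)
    (μ α β γ δ ε κ : ℝ → ℝ)
    (hμpos : ∀ t ∈ I, 0 < μ t)
    (hα : ∀ t ∈ I, HasDerivAt α (-(b t + 2 * c t * α t + 4 * a t * (α t) ^ 2)) t)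
    (hβ : ∀ t ∈ I, HasDerivAt β (-((c t + 4 * a t * α t) * β t)) t)
    (hγ : ∀ t ∈ I, HasDerivAt γ (-(a t * (β t) ^ 2)) t)
    (hδ : ∀ t ∈ I, HasDerivAt δ (f t + 2 * α t * g t - (c t + 4 * a t * α t) * δ t) t)
    (hε : ∀ t ∈ I, HasDerivAt ε ((g t - 2 * a t * δ t) * β t) t)
    (hκ : ∀ t ∈ I, HasDerivAt κ (g t * δ t - a t * (δ t) ^ 2 - h t / (μ t) ^ s) t)
    (hμ : ∀ t ∈ I, HasDerivAt μ (2 * μ t * (2 * a t * α t + d t)) t)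
    (y : ℝ)
    (ψ : ℝ → ℝ → ℂ)
    (hψ : ∀ x t, ψ x t = ((μ t ^ (-(1 / 2 : ℝ)) : ℝ) : ℂ) *
      Complex.exp (Complex.I *
        ((α t * x ^ 2 + β t * x * y + γ t * y ^ 2 + δ t * x + ε t * y + κ t : ℝ) : ℂ))) :
    (∀ x : ℝ, ∀ t ∈ I, ContDiffAt ℝ 1 (fun τ => ψ x τ) t) ∧
    (∀ t ∈ I, ContDiff ℝ 2 (fun x => ψ x t)) ∧
    (∀ x : ℝ, ∀ t ∈ I,
      Complex.I * deriv (fun τ => ψ x τ) t =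
        -(a t : ℂ) * deriv (fun x' => deriv (fun x'' => ψ x'' t) x') x
        + ((b t : ℂ) * (x : ℂ) ^ 2 - (f t : ℂ) * (x : ℂ)) * ψ x t
        - Complex.I * (c t : ℂ) * (x : ℂ) * deriv (fun x' => ψ x' t) x
        - Complex.I * (d t : ℂ) * ψ x t
        + Complex.I * (g t : ℂ) * deriv (fun x' => ψ x' t) x
        + (h t : ℂ) * ((‖ψ x t‖ ^ (2 * s) : ℝ) : ℂ) * ψ x t) :=
  stmt0_general s I hIopen a b c d f g h ha hb hc hd hf hg hh μ α β γ δ ε κ hμpos hα hβ hγ hδ hε hκ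
    hμ y ψ hψ
end

section
/- Let s ≥ 0 be real, l₀ ∈ {−1, 1}, λ ∈ ℝ, and let a, b, c, d, f, g : I → ℝ be continuous functions on an open interval I. Suppose μ : I → (0,∞) and α, β, γ, δ, ε, κ : I → ℝ are differentiable and satisfy on I: α' + b + 2cα + 4aα² = 0; β' + (c + 4aα)β = 0; γ' + l₀·aβ² = 0; δ' + (c + 4aα)δ = f + 2αg; ε' = (g − 2aδ)β; κ' = gδ − aδ²; together with μ' = 2μ(2aα + d). Set h(t) = λ·a(t)·β(t)²·μ(t)^s. If χ : ℝ × ℝ → ℂ, written as a function χ(ξ,τ), is C² and satisfies i·∂χ/∂τ − l₀·∂²χ/∂ξ² + l₀·λ·|χ|^{2s}·χ = 0 everywhere, then the function ψ(x,t) = μ(t)^{−1/2} · e^{i(α(t)x² + δ(t)x + κ(t))} · χ(β(t)x + ε(t), γ(t)) satisfies at every (x,t) ∈ ℝ × I the equation i·∂ψ/∂t = −a·∂²ψ/∂x² + (b·x² − f·x)ψ − i·c·x·∂ψ/∂x − i·d·ψ + i·g·∂ψ/∂x + h(t)·|ψ|^{2s}·ψ. -/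
/-!
Write `ψ = μ^{-1/2} e^{iS} χ(ξ, τ)` with `S = αx² + δx + κ`, `ξ = βx + ε`, `τ = γ`. The chain rule
expresses `ψ_t`, `ψ_x`, `ψ_xx` as `μ^{-1/2} e^{iS}` times combinations of `χ, χ_ξ, χ_ξξ, χ_τ`;
substituting `i χ_τ` from the autonomous equation (using `l₀² = 1`) leaves an identity whose
coefficients vanish by the Riccati system. The phase terms cancel by the Hamilton–Jacobi relation
`S_t + a S_x² + c x S_x - g S_x = f x - b x²` (the equations for `α, δ, κ`), the `χ_ξ` terms by
those for `β, ε`, the amplitude terms by `μ' = 2μ(2aα + d)`, and `|ψ|^{2s} = μ^{-s} |χ|^{2s}`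
turns `h` into `λ a β²`.
-/

open Complex

theorem hasDerivAt_uncurry_comp {E : Type*} [NormedAddCommGroup E] [NormedSpace ℝ E]
    {χ : ℝ → ℝ → E} {p q : ℝ → ℝ} {p' q' t : ℝ}
    (hχ : DifferentiableAt ℝ (fun z : ℝ × ℝ => χ z.1 z.2) (p t, q t))
    (hp : HasDerivAt p p' t) (hq : HasDerivAt q q' t) :
    HasDerivAt (fun y => χ (p y) (q y))
      (p' • deriv (fun ξ => χ ξ (q t)) (p t) + q' • deriv (fun τ => χ (p t) τ) (q t)) t := by
  have hfst : HasDerivAt (fun ξ : ℝ => (ξ, q t)) ((1 : ℝ), (0 : ℝ)) (p t) :=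
    (hasDerivAt_id _).prodMk (hasDerivAt_const _ _)
  have hsnd : HasDerivAt (fun τ : ℝ => (p t, τ)) ((0 : ℝ), (1 : ℝ)) (q t) :=
    (hasDerivAt_const _ _).prodMk (hasDerivAt_id _)
  have h₁ : deriv (fun ξ => χ ξ (q t)) (p t) =
      fderiv ℝ (fun z : ℝ × ℝ => χ z.1 z.2) (p t, q t) (1, 0) :=
    (hχ.hasFDerivAt.comp_hasDerivAt (p t) hfst :).deriv
  have h₂ : deriv (fun τ => χ (p t) τ) (q t) =
      fderiv ℝ (fun z : ℝ × ℝ => χ z.1 z.2) (p t, q t) (0, 1) :=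
    (hχ.hasFDerivAt.comp_hasDerivAt (q t) hsnd :).deriv
  have hpq : ((p', q') : ℝ × ℝ) = p' • ((1 : ℝ), (0 : ℝ)) + q' • ((0 : ℝ), (1 : ℝ)) := by
    simp
  rw [h₁, h₂, ← map_smul, ← map_smul, ← map_add, ← hpq]
  exact hχ.hasFDerivAt.comp_hasDerivAt t (hp.prodMk hq)

theorem HasDerivAt.comp_mul_add {u : ℝ → ℂ} {u' : ℂ} {β ε y : ℝ}
    (hu : HasDerivAt u u' (β * y + ε)) :
    HasDerivAt (fun y => u (β * y + ε)) (β * u') y := by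
  have := hu.scomp y (((hasDerivAt_id y).const_mul β).add_const ε)
  simpa [Function.comp_def, Complex.real_smul] using this

theorem hasDerivAt_rpow_const_of_logDeriv {μ : ℝ → ℝ} {k t : ℝ} (p : ℝ)
    (hμ : HasDerivAt μ (μ t * k) t) (hpos : 0 < μ t) :
    HasDerivAt (fun τ => μ τ ^ p) (p * k * μ t ^ p) t := by
  convert hμ.rpow_const (p := p) (Or.inl hpos.ne') using 1
  rw [Real.rpow_sub hpos, Real.rpow_one]
  field_simp

theorem hasDerivAt_cexp_quadPhase_mul (α δ κ : ℝ) {v : ℝ → ℂ} {v' : ℂ} {y : ℝ}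
    (hv : HasDerivAt v v' y) :
    HasDerivAt (fun y : ℝ => cexp (I * ↑(α * y ^ 2 + δ * y + κ)) * v y)
      (cexp (I * ↑(α * y ^ 2 + δ * y + κ)) * (I * ↑(2 * α * y + δ) * v y + v')) y := by
  have hphase : HasDerivAt (fun y : ℝ => α * y ^ 2 + δ * y + κ) (2 * α * y + δ) y :=
    ((((hasDerivAt_pow 2 y).const_mul α).add ((hasDerivAt_id y).const_mul δ)).add_const
      κ).congr_deriv (by ring)
  exact ((hphase.ofReal_comp.const_mul I).cexp.mul hv).congr_deriv (by ring)

theorem norm_rpow_mul_cexp_mul {m : ℝ} (hm : 0 < m) (s θ : ℝ) (z : ℂ) :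
    ‖((m ^ (-(1 / 2 : ℝ)) : ℝ) : ℂ) * cexp (I * θ) * z‖ ^ (2 * s) = m ^ (-s) * ‖z‖ ^ (2 * s) := by
  rw [norm_mul, norm_mul, Complex.norm_real, Real.norm_eq_abs, Complex.norm_exp_I_mul_ofReal,
    mul_one, abs_of_pos (Real.rpow_pos_of_pos hm _),
    Real.mul_rpow (Real.rpow_nonneg hm.le _) (norm_nonneg _), ← Real.rpow_mul hm.le]
  ring_nf

section LensProfile

variable (C : ℂ) (α β δ ε κ : ℝ) {u : ℝ → ℂ}

theorem hasDerivAt_lensProfile {u' : ℂ} {y : ℝ} (hu : HasDerivAt u u' (β * y + ε)) :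
    HasDerivAt (fun y : ℝ => C * cexp (I * ↑(α * y ^ 2 + δ * y + κ)) * u (β * y + ε))
      (C * cexp (I * ↑(α * y ^ 2 + δ * y + κ)) * (I * ↑(2 * α * y + δ) * u (β * y + ε) + β * u'))
      y := by
  simp_rw [mul_assoc C]
  exact ((hasDerivAt_cexp_quadPhase_mul α δ κ hu.comp_mul_add).const_mul C)

theorem deriv_lensProfile (hu : Differentiable ℝ u) :
    deriv (fun y : ℝ => C * cexp (I * ↑(α * y ^ 2 + δ * y + κ)) * u (β * y + ε)) =
      fun y : ℝ => C * cexp (I * ↑(α * y ^ 2 + δ * y + κ)) *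
        (I * ↑(2 * α * y + δ) * u (β * y + ε) + β * deriv u (β * y + ε)) :=
  funext fun _ => (hasDerivAt_lensProfile C α β δ ε κ (hu _).hasDerivAt).deriv

theorem deriv_deriv_lensProfile (hu : ContDiff ℝ 2 u) (y : ℝ) :
    deriv (deriv (fun y : ℝ => C * cexp (I * ↑(α * y ^ 2 + δ * y + κ)) * u (β * y + ε))) y =
      C * cexp (I * ↑(α * y ^ 2 + δ * y + κ)) *
        ((I * ↑(2 * α * y + δ)) ^ 2 * u (β * y + ε)
          + 2 * I * ↑(2 * α * y + δ) * β * deriv u (β * y + ε)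
          + 2 * I * α * u (β * y + ε) + β ^ 2 * deriv (deriv u) (β * y + ε)) := by
  have hu' : HasDerivAt u (deriv u (β * y + ε)) (β * y + ε) :=
    (hu.differentiable two_ne_zero _).hasDerivAt
  have hu'' : HasDerivAt (deriv u) (deriv (deriv u) (β * y + ε)) (β * y + ε) :=
    (hu.differentiable_deriv_two _).hasDerivAt
  have hslope : HasDerivAt (fun y : ℝ => I * ↑(2 * α * y + δ)) (I * ↑(2 * α)) y :=
    ((((hasDerivAt_id y).const_mul (2 * α)).add_const δ).ofReal_comp.const_mul I).congr_deriv
      (by simp)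
  rw [deriv_lensProfile C α β δ ε κ (hu.differentiable two_ne_zero)]
  simp_rw [mul_assoc C]
  have hinner := (hslope.mul hu'.comp_mul_add).add (hu''.comp_mul_add.const_mul (β : ℂ))
  refine (((hasDerivAt_cexp_quadPhase_mul α δ κ hinner).const_mul C).deriv).trans ?_
  simp only [Pi.add_apply, Pi.mul_apply]
  push_cast
  ring

theorem hasDerivAt_lensTime {χ : ℝ → ℝ → ℂ} {m α δ κ β ε γ : ℝ → ℝ}
    {m' α' δ' κ' β' ε' γ' x t : ℝ}
    (hχ : DifferentiableAt ℝ (fun z : ℝ × ℝ => χ z.1 z.2) (β t * x + ε t, γ t))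
    (hm : HasDerivAt m m' t) (hα : HasDerivAt α α' t) (hδ : HasDerivAt δ δ' t)
    (hκ : HasDerivAt κ κ' t) (hβ : HasDerivAt β β' t) (hε : HasDerivAt ε ε' t)
    (hγ : HasDerivAt γ γ' t) :
    HasDerivAt
      (fun τ => (m τ : ℂ) * cexp (I * ↑(α τ * x ^ 2 + δ τ * x + κ τ)) * χ (β τ * x + ε τ) (γ τ))
      ((m' + m t * I * ↑(α' * x ^ 2 + δ' * x + κ')) * cexp (I * ↑(α t * x ^ 2 + δ t * x + κ t)) *
          χ (β t * x + ε t) (γ t)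
        + m t * cexp (I * ↑(α t * x ^ 2 + δ t * x + κ t)) *
          ((β' * x + ε') * deriv (fun ξ => χ ξ (γ t)) (β t * x + ε t)
            + γ' * deriv (fun τ => χ (β t * x + ε t) τ) (γ t))) t := by
  have hphase : HasDerivAt (fun τ => α τ * x ^ 2 + δ τ * x + κ τ) (α' * x ^ 2 + δ' * x + κ') t :=
    ((hα.mul_const _).add (hδ.mul_const _)).add hκ
  have hχ' := hasDerivAt_uncurry_comp (p := fun τ => β τ * x + ε τ) hχ ((hβ.mul_const x).add hε) hγ
  refine ((hm.ofReal_comp.mul (hphase.ofReal_comp.const_mul I).cexp).mul hχ').congr_deriv ?_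
  simp only [Pi.mul_apply, Complex.real_smul]
  push_cast
  ring

theorem stmt3_general
    (s : ℝ)
    (l₀ : ℝ) (hl₀ : l₀ = 1 ∨ l₀ = -1)
    (lam : ℝ)
    (I : Set ℝ)
    (a b c d f g : ℝ → ℝ)
    (μ α β γ δ ε κ : ℝ → ℝ)
    (hμpos : ∀ t ∈ I, 0 < μ t)
    (hα : ∀ t ∈ I, HasDerivAt α (-(b t + 2 * c t * α t + 4 * a t * (α t) ^ 2)) t)
    (hβ : ∀ t ∈ I, HasDerivAt β (-((c t + 4 * a t * α t) * β t)) t)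
    (hγ : ∀ t ∈ I, HasDerivAt γ (-(l₀ * a t * (β t) ^ 2)) t)
    (hδ : ∀ t ∈ I, HasDerivAt δ (f t + 2 * α t * g t - (c t + 4 * a t * α t) * δ t) t)
    (hε : ∀ t ∈ I, HasDerivAt ε ((g t - 2 * a t * δ t) * β t) t)
    (hκ : ∀ t ∈ I, HasDerivAt κ (g t * δ t - a t * (δ t) ^ 2) t)
    (hμ : ∀ t ∈ I, HasDerivAt μ (2 * μ t * (2 * a t * α t + d t)) t)
    (h : ℝ → ℝ) (hh : ∀ t, h t = lam * a t * (β t) ^ 2 * (μ t) ^ s)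
    (χ : ℝ → ℝ → ℂ)
    (hχsmooth : ContDiff ℝ 2 (fun p : ℝ × ℝ => χ p.1 p.2))
    (hχ : ∀ ξ τ : ℝ,
      Complex.I * deriv (fun τ' => χ ξ τ') τ
        - (l₀ : ℂ) * deriv (fun ξ' => deriv (fun ξ'' => χ ξ'' τ) ξ') ξ
        + (l₀ : ℂ) * (lam : ℂ) * ((‖χ ξ τ‖ ^ (2 * s) : ℝ) : ℂ) * χ ξ τ = 0)
    (ψ : ℝ → ℝ → ℂ)
    (hψ : ∀ x t, ψ x t = ((μ t ^ (-(1 / 2 : ℝ)) : ℝ) : ℂ) *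
      Complex.exp (Complex.I * ((α t * x ^ 2 + δ t * x + κ t : ℝ) : ℂ)) *
      χ (β t * x + ε t) (γ t)) :
    ∀ x : ℝ, ∀ t ∈ I,
      Complex.I * deriv (fun τ => ψ x τ) t =
        -(a t : ℂ) * deriv (fun x' => deriv (fun x'' => ψ x'' t) x') x
        + ((b t : ℂ) * (x : ℂ) ^ 2 - (f t : ℂ) * (x : ℂ)) * ψ x t
        - Complex.I * (c t : ℂ) * (x : ℂ) * deriv (fun x' => ψ x' t) x
        - Complex.I * (d t : ℂ) * ψ x t
        + Complex.I * (g t : ℂ) * deriv (fun x' => ψ x' t) x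
        + (h t : ℂ) * ((‖ψ x t‖ ^ (2 * s) : ℝ) : ℂ) * ψ x t := by
  intro x t ht
  obtain rfl : ψ = _ := funext₂ hψ
  have hl₀sq : (l₀ : ℂ) ^ 2 = 1 := by rcases hl₀ with rfl | rfl <;> norm_num
  have hμs : ((μ t ^ s : ℝ) : ℂ) * ((μ t ^ (-s) : ℝ) : ℂ) = 1 := by
    rw [← ofReal_mul, ← Real.rpow_add (hμpos t ht), add_neg_cancel, Real.rpow_zero, ofReal_one]
  have hamp := hasDerivAt_rpow_const_of_logDeriv (-(1 / 2))
    ((hμ t ht).congr_deriv (by ring : _ = μ t * (2 * (2 * a t * α t + d t)))) (hμpos t ht)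
  have hψt := hasDerivAt_lensTime (x := x) (hχsmooth.differentiable (by norm_num) _) hamp
    (hα t ht) (hδ t ht) (hκ t ht) (hβ t ht) (hε t ht) (hγ t ht)
  have hslice : ContDiff ℝ 2 (fun ξ => χ ξ (γ t)) := hχsmooth.comp (contDiff_prodMk_left (γ t))
  have hnls := hχ (β t * x + ε t) (γ t)
  beta_reduce
  rw [hψt.deriv, deriv_deriv_lensProfile _ _ _ _ _ _ hslice,
    deriv_lensProfile _ _ _ _ _ _ (hslice.differentiable two_ne_zero),
    norm_rpow_mul_cexp_mul (hμpos t ht), hh]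
  push_cast at hnls ⊢
  set W := ((μ t ^ (-(1 / 2 : ℝ)) : ℝ) : ℂ) * cexp (Complex.I * (α t * x ^ 2 + δ t * x + κ t))
  set X := χ (β t * x + ε t) (γ t)
  set Q := deriv (deriv fun ξ => χ ξ (γ t)) (β t * x + ε t)
  set N : ℂ := ((‖X‖ ^ (2 * s) : ℝ) : ℂ)
  set Sx : ℂ := 2 * α t * x + δ t
  set St : ℂ := -(b t + 2 * c t * α t + 4 * a t * α t ^ 2) * x ^ 2
    + (f t + 2 * α t * g t - (c t + 4 * a t * α t) * δ t) * x + (g t * δ t - a t * δ t ^ 2)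
  linear_combination (-(W * l₀ * a t * β t ^ 2)) * hnls
    + W * a t * β t ^ 2 * (lam * N * X - Q) * hl₀sq
    - lam * a t * β t ^ 2 * N * W * X * hμs
    + W * X * (St + a t * Sx ^ 2 + c t * x * Sx - g t * Sx) * Complex.I_sq

/-- The generalized lens transformation (Theorem 1(ii) / appendix lemma with
parameter `l₀ = ±1`): if `χ` solves the autonomous NLS
`i χ_τ - l₀ χ_ξξ + l₀ λ |χ|^{2s} χ = 0`, then
`ψ(x,t) = μ(t)^{-1/2} e^{i(α x² + δ x + κ)} χ(βx + ε, γ)` solves the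
variable-coefficient NLS with `h(t) = λ a(t) β(t)² μ(t)^s`. -/
theorem stmt3
    (s : ℝ) (hs : 0 ≤ s)
    (l₀ : ℝ) (hl₀ : l₀ = 1 ∨ l₀ = -1)
    (lam : ℝ)
    (I : Set ℝ) (hIopen : IsOpen I) (hIconn : I.OrdConnected)
    (a b c d f g : ℝ → ℝ)
    (ha : ContinuousOn a I) (hb : ContinuousOn b I) (hc : ContinuousOn c I)
    (hd : ContinuousOn d I) (hf : ContinuousOn f I) (hg : ContinuousOn g I)
    (μ α β γ δ ε κ : ℝ → ℝ)
    (hμpos : ∀ t ∈ I, 0 < μ t)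
    (hα : ∀ t ∈ I, HasDerivAt α (-(b t + 2 * c t * α t + 4 * a t * (α t) ^ 2)) t)
    (hβ : ∀ t ∈ I, HasDerivAt β (-((c t + 4 * a t * α t) * β t)) t)
    (hγ : ∀ t ∈ I, HasDerivAt γ (-(l₀ * a t * (β t) ^ 2)) t)
    (hδ : ∀ t ∈ I, HasDerivAt δ (f t + 2 * α t * g t - (c t + 4 * a t * α t) * δ t) t)
    (hε : ∀ t ∈ I, HasDerivAt ε ((g t - 2 * a t * δ t) * β t) t)
    (hκ : ∀ t ∈ I, HasDerivAt κ (g t * δ t - a t * (δ t) ^ 2) t)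
    (hμ : ∀ t ∈ I, HasDerivAt μ (2 * μ t * (2 * a t * α t + d t)) t)
    (h : ℝ → ℝ) (hh : ∀ t, h t = lam * a t * (β t) ^ 2 * (μ t) ^ s)
    (χ : ℝ → ℝ → ℂ)
    (hχsmooth : ContDiff ℝ 2 (fun p : ℝ × ℝ => χ p.1 p.2))
    (hχ : ∀ ξ τ : ℝ,
      Complex.I * deriv (fun τ' => χ ξ τ') τ
        - (l₀ : ℂ) * deriv (fun ξ' => deriv (fun ξ'' => χ ξ'' τ) ξ') ξ
        + (l₀ : ℂ) * (lam : ℂ) * ((‖χ ξ τ‖ ^ (2 * s) : ℝ) : ℂ) * χ ξ τ = 0)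
    (ψ : ℝ → ℝ → ℂ)
    (hψ : ∀ x t, ψ x t = ((μ t ^ (-(1 / 2 : ℝ)) : ℝ) : ℂ) *
      Complex.exp (Complex.I * ((α t * x ^ 2 + δ t * x + κ t : ℝ) : ℂ)) *
      χ (β t * x + ε t) (γ t)) :
    ∀ x : ℝ, ∀ t ∈ I,
      Complex.I * deriv (fun τ => ψ x τ) t =
        -(a t : ℂ) * deriv (fun x' => deriv (fun x'' => ψ x'' t) x') x
        + ((b t : ℂ) * (x : ℂ) ^ 2 - (f t : ℂ) * (x : ℂ)) * ψ x t
        - Complex.I * (c t : ℂ) * (x : ℂ) * deriv (fun x' => ψ x' t) x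
        - Complex.I * (d t : ℂ) * ψ x t
        + Complex.I * (g t : ℂ) * deriv (fun x' => ψ x' t) x
        + (h t : ℂ) * ((‖ψ x t‖ ^ (2 * s) : ℝ) : ℂ) * ψ x t :=
  stmt3_general s l₀ hl₀ lam I a b c d f g μ α β γ δ ε κ hμpos hα hβ hγ hδ hε hκ hμ h hh χ hχsmooth
    hχ ψ hψ
end LensProfile
end

section
/- Let l₀ ∈ {−1, 1}, h₀ ∈ ℝ, s ≥ 0, and let a, b, c, d, f₁, f₂, g₁, g₂ : I → ℝ be continuous on an open interval I. Suppose μ : I → (0,∞) and α, β, γ, δ₁, δ₂, ε₁, ε₂, κ₁, κ₂ : I → ℝ are differentiable and satisfy on I: α' + b + 2cα + 4aα² = 0; β' + (c + 4aα)β = 0; γ' + l₀·aβ² = 0; δ_j' + (c + 4aα)δ_j = f_j + 2g_j·α and ε_j' = (g_j − 2aδ_j)β and κ_j' = g_j·δ_j − a·δ_j² for j = 1, 2; together with μ' = 2μ(2aα + d). Set h(t) = h₀·a(t)·β(t)²·μ(t)^{2s}. If χ : ℝ × ℝ × ℝ → ℂ, written χ(ξ,η,τ), is C² and satisfies i·∂χ/∂τ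 − l₀·(∂²χ/∂ξ² + ∂²χ/∂η²) = −l₀·h₀·|χ|^{2s}·χ everywhere, then ψ(x,y,t) = μ(t)^{−1} · exp(i(α(t)(x² + y²) + δ₁(t)x + δ₂(t)y + κ₁(t) + κ₂(t))) · χ(β(t)x + ε₁(t), β(t)y + ε₂(t), γ(t)) satisfies at every (x,y,t) ∈ ℝ² × I the two-dimensional equation i·∂ψ/∂t = −a(ψ_xx + ψ_yy) + b(x² + y²)ψ − i·c·(x·ψ_x + y·ψ_y) − 2i·d·ψ − (f₁·x + f₂·y)ψ + i·(g₁·ψ_x + g₂·ψ_y) + h(t)·|ψ|^{2s}·ψ. -/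
/-!
Write `ψ = E · χ(βx + ε₁, βy + ε₂, γ)` with envelope `E = μ⁻¹ e^{iΦ}`. Because the phase `Φ` is
quadratic in `x` and `y`, every spatial derivative of `ψ` is `E` times a combination of `χ` and its
partial derivatives at the transformed point, and so is the time derivative, whose coefficients are
the derivatives of `μ, α, β, γ, δⱼ, εⱼ, κⱼ`. Substituting the ODE system for these, everything
cancels except `-l₀ a β² E` times the equation for `χ` (using `l₀² = 1`); the factor `μ^{2s}` in `h`
absorbs the `μ^{-2s}` in `|ψ|^{2s}`.
-/

open Complex

section ChainRule

variable {E : Type*} [NormedAddCommGroup E] [NormedSpace ℝ E]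

theorem HasFDerivAt.hasDerivAt_comp_prodMk₃ {F : ℝ × ℝ × ℝ → E} {L : ℝ × ℝ × ℝ →L[ℝ] E}
    {u v w : ℝ → ℝ} {u' v' w' t : ℝ} (hF : HasFDerivAt F L (u t, v t, w t))
    (hu : HasDerivAt u u' t) (hv : HasDerivAt v v' t) (hw : HasDerivAt w w' t) :
    HasDerivAt (fun s => F (u s, v s, w s))
      (u' • L (1, 0, 0) + v' • L (0, 1, 0) + w' • L (0, 0, 1)) t := by
  refine (hF.comp_hasDerivAt t (hu.prodMk (hv.prodMk hw))).congr_deriv ?_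
  rw [← map_smul, ← map_smul, ← map_smul, ← map_add, ← map_add]
  simp

theorem DifferentiableAt.hasDerivAt_comp_prodMk₃ {F : ℝ × ℝ × ℝ → E}
    {u v w : ℝ → ℝ} {u' v' w' t : ℝ} (hF : DifferentiableAt ℝ F (u t, v t, w t))
    (hu : HasDerivAt u u' t) (hv : HasDerivAt v v' t) (hw : HasDerivAt w w' t) :
    HasDerivAt (fun s => F (u s, v s, w s))
      (u' • deriv (fun ξ => F (ξ, v t, w t)) (u t) + v' • deriv (fun η => F (u t, η, w t)) (v t)
        + w' • deriv (fun τ => F (u t, v t, τ)) (w t)) t := by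
  have hL := hF.hasFDerivAt
  have h₁ := (hL.hasDerivAt_comp_prodMk₃ (u := fun s => s) (hasDerivAt_id' (u t))
    (hasDerivAt_const (u t) (v t)) (hasDerivAt_const (u t) (w t))).deriv
  have h₂ := (hL.hasDerivAt_comp_prodMk₃ (v := fun s => s) (hasDerivAt_const (v t) (u t))
    (hasDerivAt_id' (v t)) (hasDerivAt_const (v t) (w t))).deriv
  have h₃ := (hL.hasDerivAt_comp_prodMk₃ (w := fun s => s) (hasDerivAt_const (w t) (u t))
    (hasDerivAt_const (w t) (v t)) (hasDerivAt_id' (w t))).deriv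
  simp only [one_smul, zero_smul, add_zero, zero_add] at h₁ h₂ h₃
  rw [h₁, h₂, h₃]
  exact hL.hasDerivAt_comp_prodMk₃ hu hv hw

end ChainRule

section Chirp

variable {m : ℂ} {φ : ℝ → ℝ} {α δ k β ε : ℝ} {F : ℝ → ℂ} {x : ℝ}

theorem hasDerivAt_chirp_mul_comp_affine (hφ : ∀ x, φ x = α * x ^ 2 + δ * x + k)
    (hF : DifferentiableAt ℝ F (β * x + ε)) :
    HasDerivAt (fun x => m * exp (I * φ x) * F (β * x + ε))
      (m * exp (I * φ x) *
        (I * ((2 * α * x + δ : ℝ) : ℂ) * F (β * x + ε) + β * deriv F (β * x + ε))) x := by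
  obtain rfl : φ = fun x => α * x ^ 2 + δ * x + k := funext hφ
  have hφ' : HasDerivAt (fun x : ℝ => α * x ^ 2 + δ * x + k) (2 * α * x + δ) x :=
    ((((hasDerivAt_pow 2 x).const_mul α).add ((hasDerivAt_id' x).const_mul δ)).add_const
      k).congr_deriv (by push_cast; ring)
  have hlin : HasDerivAt (fun x : ℝ => β * x + ε) β x := by
    simpa using ((hasDerivAt_id' x).const_mul β).add_const ε
  have hFc : HasDerivAt (fun x => F (β * x + ε)) (β * deriv F (β * x + ε)) x := by
    simpa [Function.comp_def, Complex.real_smul] using hF.hasDerivAt.scomp x hlin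
  exact (((hφ'.ofReal_comp.const_mul I).cexp.const_mul m).mul hFc).congr_deriv (by ring)

theorem deriv_deriv_chirp_mul_comp_affine (hφ : ∀ x, φ x = α * x ^ 2 + δ * x + k)
    (hF : Differentiable ℝ F) (hF' : DifferentiableAt ℝ (deriv F) (β * x + ε)) :
    deriv (fun x' => deriv (fun x => m * exp (I * φ x) * F (β * x + ε)) x') x =
      m * exp (I * φ x) *
        ((I * ((2 * α * x + δ : ℝ) : ℂ)) ^ 2 * F (β * x + ε)
          + I * ((2 * α : ℝ) : ℂ) * F (β * x + ε)
          + 2 * I * ((2 * α * x + δ : ℝ) : ℂ) * β * deriv F (β * x + ε)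
          + β ^ 2 * deriv (deriv F) (β * x + ε)) := by
  have hderiv : deriv (fun x => m * exp (I * φ x) * F (β * x + ε)) = fun x =>
      I * ((2 * α * x + δ : ℝ) : ℂ) * (m * exp (I * φ x) * F (β * x + ε))
        + m * β * exp (I * φ x) * deriv F (β * x + ε) := by
    funext x
    rw [(hasDerivAt_chirp_mul_comp_affine hφ (hF _)).deriv]
    ring
  have hlin : HasDerivAt (fun x : ℝ => I * ((2 * α * x + δ : ℝ) : ℂ)) (I * ((2 * α : ℝ) : ℂ)) x :=
    (((hasDerivAt_id' x).const_mul (2 * α)).add_const δ).congr_deriv (mul_one _)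
      |>.ofReal_comp.const_mul I
  rw [hderiv]
  refine ((hlin.mul (hasDerivAt_chirp_mul_comp_affine (m := m) hφ (hF _))).add
    (hasDerivAt_chirp_mul_comp_affine (m := m * β) hφ hF')).deriv.trans ?_
  ring

end Chirp

section Lens

variable (μ α β γ δ₁ δ₂ ε₁ ε₂ κ₁ κ₂ : ℝ → ℝ) (χ : ℝ → ℝ → ℝ → ℂ)

def lensPhase (x y t : ℝ) : ℝ := α t * (x ^ 2 + y ^ 2) + δ₁ t * x + δ₂ t * y + κ₁ t + κ₂ t

noncomputable def lensEnvelope (x y t : ℝ) : ℂ :=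
  ((μ t)⁻¹ : ℝ) * exp (I * lensPhase α δ₁ δ₂ κ₁ κ₂ x y t)

noncomputable def lensAnsatz (x y t : ℝ) : ℂ :=
  lensEnvelope μ α δ₁ δ₂ κ₁ κ₂ x y t * χ (β t * x + ε₁ t) (β t * y + ε₂ t) (γ t)

variable {μ α β γ δ₁ δ₂ ε₁ ε₂ κ₁ κ₂ χ}

theorem norm_lensEnvelope {x y t : ℝ} (hμ : 0 < μ t) :
    ‖lensEnvelope μ α δ₁ δ₂ κ₁ κ₂ x y t‖ = (μ t)⁻¹ := by
  rw [lensEnvelope, norm_mul, norm_exp_I_mul_ofReal, mul_one, norm_real, Real.norm_eq_abs,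
    abs_of_pos (inv_pos.2 hμ)]

theorem hasDerivAt_lensAnsatz_x (hχ : Differentiable ℝ fun p : ℝ × ℝ × ℝ => χ p.1 p.2.1 p.2.2)
    (x y t : ℝ) :
    HasDerivAt (fun x' => lensAnsatz μ α β γ δ₁ δ₂ ε₁ ε₂ κ₁ κ₂ χ x' y t)
      (lensEnvelope μ α δ₁ δ₂ κ₁ κ₂ x y t *
        (I * ((2 * α t * x + δ₁ t : ℝ) : ℂ) * χ (β t * x + ε₁ t) (β t * y + ε₂ t) (γ t)
          + β t * deriv (fun ξ => χ ξ (β t * y + ε₂ t) (γ t)) (β t * x + ε₁ t))) x :=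
  hasDerivAt_chirp_mul_comp_affine (φ := fun x' => lensPhase α δ₁ δ₂ κ₁ κ₂ x' y t)
    (k := α t * y ^ 2 + δ₂ t * y + κ₁ t + κ₂ t) (fun x' => by unfold lensPhase; ring)
    ((hχ.comp (f := fun ξ => (ξ, β t * y + ε₂ t, γ t)) (by fun_prop)).differentiableAt)

theorem hasDerivAt_lensAnsatz_y (hχ : Differentiable ℝ fun p : ℝ × ℝ × ℝ => χ p.1 p.2.1 p.2.2)
    (x y t : ℝ) :
    HasDerivAt (fun y' => lensAnsatz μ α β γ δ₁ δ₂ ε₁ ε₂ κ₁ κ₂ χ x y' t)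
      (lensEnvelope μ α δ₁ δ₂ κ₁ κ₂ x y t *
        (I * ((2 * α t * y + δ₂ t : ℝ) : ℂ) * χ (β t * x + ε₁ t) (β t * y + ε₂ t) (γ t)
          + β t * deriv (fun η => χ (β t * x + ε₁ t) η (γ t)) (β t * y + ε₂ t))) y :=
  hasDerivAt_chirp_mul_comp_affine (φ := fun y' => lensPhase α δ₁ δ₂ κ₁ κ₂ x y' t)
    (k := α t * x ^ 2 + δ₁ t * x + κ₁ t + κ₂ t) (fun y' => by unfold lensPhase; ring)
    ((hχ.comp (f := fun η => (β t * x + ε₁ t, η, γ t)) (by fun_prop)).differentiableAt)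

theorem deriv_deriv_lensAnsatz_x (hχ : ContDiff ℝ 2 fun p : ℝ × ℝ × ℝ => χ p.1 p.2.1 p.2.2)
    (x y t : ℝ) :
    deriv (fun x' => deriv (fun x'' => lensAnsatz μ α β γ δ₁ δ₂ ε₁ ε₂ κ₁ κ₂ χ x'' y t) x') x =
      lensEnvelope μ α δ₁ δ₂ κ₁ κ₂ x y t *
        ((I * ((2 * α t * x + δ₁ t : ℝ) : ℂ)) ^ 2 * χ (β t * x + ε₁ t) (β t * y + ε₂ t) (γ t)
          + I * ((2 * α t : ℝ) : ℂ) * χ (β t * x + ε₁ t) (β t * y + ε₂ t) (γ t)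
          + 2 * I * ((2 * α t * x + δ₁ t : ℝ) : ℂ) * β t *
            deriv (fun ξ => χ ξ (β t * y + ε₂ t) (γ t)) (β t * x + ε₁ t)
          + β t ^ 2 * deriv (fun ξ' => deriv (fun ξ'' => χ ξ'' (β t * y + ε₂ t) (γ t)) ξ')
            (β t * x + ε₁ t)) := by
  have hslice : ContDiff ℝ 2 fun ξ => χ ξ (β t * y + ε₂ t) (γ t) :=
    hχ.comp (f := fun ξ => (ξ, β t * y + ε₂ t, γ t)) (by fun_prop)
  exact deriv_deriv_chirp_mul_comp_affine (φ := fun x' => lensPhase α δ₁ δ₂ κ₁ κ₂ x' y t)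
    (k := α t * y ^ 2 + δ₂ t * y + κ₁ t + κ₂ t) (fun x' => by unfold lensPhase; ring)
    (hslice.differentiable two_ne_zero)
    ((hslice.deriv' (n := 1)).differentiable one_ne_zero _)

theorem deriv_deriv_lensAnsatz_y (hχ : ContDiff ℝ 2 fun p : ℝ × ℝ × ℝ => χ p.1 p.2.1 p.2.2)
    (x y t : ℝ) :
    deriv (fun y' => deriv (fun y'' => lensAnsatz μ α β γ δ₁ δ₂ ε₁ ε₂ κ₁ κ₂ χ x y'' t) y') y =
      lensEnvelope μ α δ₁ δ₂ κ₁ κ₂ x y t *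
        ((I * ((2 * α t * y + δ₂ t : ℝ) : ℂ)) ^ 2 * χ (β t * x + ε₁ t) (β t * y + ε₂ t) (γ t)
          + I * ((2 * α t : ℝ) : ℂ) * χ (β t * x + ε₁ t) (β t * y + ε₂ t) (γ t)
          + 2 * I * ((2 * α t * y + δ₂ t : ℝ) : ℂ) * β t *
            deriv (fun η => χ (β t * x + ε₁ t) η (γ t)) (β t * y + ε₂ t)
          + β t ^ 2 * deriv (fun η' => deriv (fun η'' => χ (β t * x + ε₁ t) η'' (γ t)) η')
            (β t * y + ε₂ t)) := by
  have hslice : ContDiff ℝ 2 fun η => χ (β t * x + ε₁ t) η (γ t) :=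
    hχ.comp (f := fun η => (β t * x + ε₁ t, η, γ t)) (by fun_prop)
  exact deriv_deriv_chirp_mul_comp_affine (φ := fun y' => lensPhase α δ₁ δ₂ κ₁ κ₂ x y' t)
    (k := α t * x ^ 2 + δ₁ t * x + κ₁ t + κ₂ t) (fun y' => by unfold lensPhase; ring)
    (hslice.differentiable two_ne_zero)
    ((hslice.deriv' (n := 1)).differentiable one_ne_zero _)

theorem rpow_mul_norm_lensAnsatz_rpow {x y t : ℝ} (hμ : 0 < μ t) (p : ℝ) :
    μ t ^ p * ‖lensAnsatz μ α β γ δ₁ δ₂ ε₁ ε₂ κ₁ κ₂ χ x y t‖ ^ p =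
      ‖χ (β t * x + ε₁ t) (β t * y + ε₂ t) (γ t)‖ ^ p := by
  rw [lensAnsatz, norm_mul, norm_lensEnvelope hμ, Real.mul_rpow (inv_nonneg.2 hμ.le)
    (norm_nonneg _), Real.inv_rpow hμ.le, ← mul_assoc, mul_inv_cancel₀ (by positivity), one_mul]

section TimeDerivative

variable {x y t μ' α' β' γ' δ₁' δ₂' ε₁' ε₂' κ₁' κ₂' : ℝ}

theorem hasDerivAt_lensPhase_t (hα : HasDerivAt α α' t) (hδ₁ : HasDerivAt δ₁ δ₁' t)
    (hδ₂ : HasDerivAt δ₂ δ₂' t) (hκ₁ : HasDerivAt κ₁ κ₁' t) (hκ₂ : HasDerivAt κ₂ κ₂' t) :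
    HasDerivAt (fun τ => lensPhase α δ₁ δ₂ κ₁ κ₂ x y τ)
      (α' * (x ^ 2 + y ^ 2) + δ₁' * x + δ₂' * y + κ₁' + κ₂') t :=
  ((((hα.mul_const _).add (hδ₁.mul_const x)).add (hδ₂.mul_const y)).add hκ₁).add hκ₂

theorem hasDerivAt_lensEnvelope_t {φ' : ℝ} (hμ : HasDerivAt μ μ' t) (hμ0 : μ t ≠ 0)
    (hφ : HasDerivAt (fun τ => lensPhase α δ₁ δ₂ κ₁ κ₂ x y τ) φ' t) :
    HasDerivAt (fun τ => lensEnvelope μ α δ₁ δ₂ κ₁ κ₂ x y τ)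
      (lensEnvelope μ α δ₁ δ₂ κ₁ κ₂ x y t * (-(μ' / μ t : ℝ) + I * φ')) t := by
  refine ((hμ.inv hμ0).ofReal_comp.mul (hφ.ofReal_comp.const_mul I).cexp).congr_deriv ?_
  have hμ0' : (μ t : ℂ) ≠ 0 := ofReal_ne_zero.2 hμ0
  simp only [lensEnvelope, Pi.inv_apply]
  push_cast
  field_simp

theorem hasDerivAt_lensAnsatz_t {φ' : ℝ}
    (hχ : Differentiable ℝ fun p : ℝ × ℝ × ℝ => χ p.1 p.2.1 p.2.2)
    (hμ : HasDerivAt μ μ' t) (hμ0 : μ t ≠ 0)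
    (hφ : HasDerivAt (fun τ => lensPhase α δ₁ δ₂ κ₁ κ₂ x y τ) φ' t)
    (hβ : HasDerivAt β β' t) (hγ : HasDerivAt γ γ' t) (hε₁ : HasDerivAt ε₁ ε₁' t)
    (hε₂ : HasDerivAt ε₂ ε₂' t) :
    HasDerivAt (fun τ => lensAnsatz μ α β γ δ₁ δ₂ ε₁ ε₂ κ₁ κ₂ χ x y τ)
      (lensEnvelope μ α δ₁ δ₂ κ₁ κ₂ x y t *
        ((-(μ' / μ t : ℝ) + I * φ') * χ (β t * x + ε₁ t) (β t * y + ε₂ t) (γ t)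
          + (β' * x + ε₁' : ℝ) * deriv (fun ξ => χ ξ (β t * y + ε₂ t) (γ t)) (β t * x + ε₁ t)
          + (β' * y + ε₂' : ℝ) * deriv (fun η => χ (β t * x + ε₁ t) η (γ t)) (β t * y + ε₂ t)
          + γ' * deriv (fun τ => χ (β t * x + ε₁ t) (β t * y + ε₂ t) τ) (γ t))) t := by
  have hχt := (hχ _).hasDerivAt_comp_prodMk₃ ((hβ.mul_const x).add hε₁)
    ((hβ.mul_const y).add hε₂) hγ
  simp only [Pi.add_apply, Complex.real_smul] at hχt
  exact ((hasDerivAt_lensEnvelope_t hμ hμ0 hφ).mul hχt).congr_deriv (by ring)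

end TimeDerivative

end Lens

theorem stmt13_general
    (l₀ : ℝ) (hl₀ : l₀ = 1 ∨ l₀ = -1)
    (h₀ s : ℝ)
    (I : Set ℝ)
    (a b c d f₁ f₂ g₁ g₂ : ℝ → ℝ)
    (μ α β γ δ₁ δ₂ ε₁ ε₂ κ₁ κ₂ : ℝ → ℝ)
    (hμpos : ∀ t ∈ I, 0 < μ t)
    (hα : ∀ t ∈ I, HasDerivAt α (-(b t + 2 * c t * α t + 4 * a t * (α t) ^ 2)) t)
    (hβ : ∀ t ∈ I, HasDerivAt β (-((c t + 4 * a t * α t) * β t)) t)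
    (hγ : ∀ t ∈ I, HasDerivAt γ (-(l₀ * a t * (β t) ^ 2)) t)
    (hδ₁ : ∀ t ∈ I, HasDerivAt δ₁ (f₁ t + 2 * g₁ t * α t - (c t + 4 * a t * α t) * δ₁ t) t)
    (hδ₂ : ∀ t ∈ I, HasDerivAt δ₂ (f₂ t + 2 * g₂ t * α t - (c t + 4 * a t * α t) * δ₂ t) t)
    (hε₁ : ∀ t ∈ I, HasDerivAt ε₁ ((g₁ t - 2 * a t * δ₁ t) * β t) t)
    (hε₂ : ∀ t ∈ I, HasDerivAt ε₂ ((g₂ t - 2 * a t * δ₂ t) * β t) t)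
    (hκ₁ : ∀ t ∈ I, HasDerivAt κ₁ (g₁ t * δ₁ t - a t * (δ₁ t) ^ 2) t)
    (hκ₂ : ∀ t ∈ I, HasDerivAt κ₂ (g₂ t * δ₂ t - a t * (δ₂ t) ^ 2) t)
    (hμ : ∀ t ∈ I, HasDerivAt μ (2 * μ t * (2 * a t * α t + d t)) t)
    (h : ℝ → ℝ) (hh : ∀ t, h t = h₀ * a t * (β t) ^ 2 * (μ t) ^ (2 * s))
    (χ : ℝ → ℝ → ℝ → ℂ)
    (hχsmooth : ContDiff ℝ 2 (fun p : ℝ × ℝ × ℝ => χ p.1 p.2.1 p.2.2))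
    (hχ : ∀ ξ η τ : ℝ,
      Complex.I * deriv (fun τ' => χ ξ η τ') τ
        - (l₀ : ℂ) * (deriv (fun ξ' => deriv (fun ξ'' => χ ξ'' η τ) ξ') ξ
            + deriv (fun η' => deriv (fun η'' => χ ξ η'' τ) η') η)
        = -(l₀ : ℂ) * (h₀ : ℂ) * ((‖χ ξ η τ‖ ^ (2 * s) : ℝ) : ℂ) * χ ξ η τ)
    (ψ : ℝ → ℝ → ℝ → ℂ)
    (hψ : ∀ x y t, ψ x y t = ((μ t)⁻¹ : ℝ) *
      Complex.exp (Complex.I *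
        ((α t * (x ^ 2 + y ^ 2) + δ₁ t * x + δ₂ t * y + κ₁ t + κ₂ t : ℝ) : ℂ)) *
      χ (β t * x + ε₁ t) (β t * y + ε₂ t) (γ t)) :
    ∀ x y : ℝ, ∀ t ∈ I,
      Complex.I * deriv (fun τ => ψ x y τ) t =
        -(a t : ℂ) * (deriv (fun x' => deriv (fun x'' => ψ x'' y t) x') x
            + deriv (fun y' => deriv (fun y'' => ψ x y'' t) y') y)
        + (b t : ℂ) * ((x : ℂ) ^ 2 + (y : ℂ) ^ 2) * ψ x y t
        - Complex.I * (c t : ℂ) * ((x : ℂ) * deriv (fun x' => ψ x' y t) x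
            + (y : ℂ) * deriv (fun y' => ψ x y' t) y)
        - 2 * Complex.I * (d t : ℂ) * ψ x y t
        - ((f₁ t : ℂ) * (x : ℂ) + (f₂ t : ℂ) * (y : ℂ)) * ψ x y t
        + Complex.I * ((g₁ t : ℂ) * deriv (fun x' => ψ x' y t) x
            + (g₂ t : ℂ) * deriv (fun y' => ψ x y' t) y)
        + (h t : ℂ) * ((‖ψ x y t‖ ^ (2 * s) : ℝ) : ℂ) * ψ x y t := by
  intro x y t ht
  obtain rfl : ψ = lensAnsatz μ α β γ δ₁ δ₂ ε₁ ε₂ κ₁ κ₂ χ := by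
    funext x y t
    exact hψ x y t
  have hχd : Differentiable ℝ fun p : ℝ × ℝ × ℝ => χ p.1 p.2.1 p.2.2 :=
    hχsmooth.differentiable two_ne_zero
  have hphase := hasDerivAt_lensPhase_t (x := x) (y := y) (hα t ht) (hδ₁ t ht) (hδ₂ t ht)
    (hκ₁ t ht) (hκ₂ t ht)
  have hnonlin : h t * ‖lensAnsatz μ α β γ δ₁ δ₂ ε₁ ε₂ κ₁ κ₂ χ x y t‖ ^ (2 * s) =
      h₀ * a t * β t ^ 2 * ‖χ (β t * x + ε₁ t) (β t * y + ε₂ t) (γ t)‖ ^ (2 * s) := by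
    rw [hh, mul_assoc, rpow_mul_norm_lensAnsatz_rpow (hμpos t ht)]
  have hl : (l₀ : ℂ) ^ 2 = 1 := by rcases hl₀ with rfl | rfl <;> norm_num
  have hχeq := hχ (β t * x + ε₁ t) (β t * y + ε₂ t) (γ t)
  rw [(hasDerivAt_lensAnsatz_t hχd (hμ t ht) (hμpos t ht).ne' hphase (hβ t ht) (hγ t ht)
      (hε₁ t ht) (hε₂ t ht)).deriv, (hasDerivAt_lensAnsatz_x hχd x y t).deriv,
    (hasDerivAt_lensAnsatz_y hχd x y t).deriv, deriv_deriv_lensAnsatz_x hχsmooth,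
    deriv_deriv_lensAnsatz_y hχsmooth, ← ofReal_mul (h t), hnonlin, lensAnsatz]
  have hlogμ : 2 * μ t * (2 * a t * α t + d t) / μ t = 2 * (2 * a t * α t + d t) := by
    field_simp [(hμpos t ht).ne']
  rw [hlogμ]
  push_cast
  linear_combination (norm := (ring_nf; simp only [I_sq, hl]; ring))
    (-(l₀ : ℂ) * a t * β t ^ 2 * lensEnvelope μ α δ₁ δ₂ κ₁ κ₂ x y t) * hχeq

/-- The two-dimensional generalized lens transformation (appendix Lemma, used in
Theorem 1(iii)): the ansatz `ψ = μ^{-1} e^{i(α(x²+y²) + δ₁x + δ₂y + κ₁ + κ₂)}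
χ(βx + ε₁, βy + ε₂, γ)` transforms the 2D variable-coefficient NLS into the
autonomous equation `i χ_τ - l₀(χ_ξξ + χ_ηη) = -l₀ h₀ |χ|^{2s} χ`. -/
theorem stmt13
    (l₀ : ℝ) (hl₀ : l₀ = 1 ∨ l₀ = -1)
    (h₀ s : ℝ) (hs : 0 ≤ s)
    (I : Set ℝ) (hIopen : IsOpen I) (hIconn : I.OrdConnected)
    (a b c d f₁ f₂ g₁ g₂ : ℝ → ℝ)
    (ha : ContinuousOn a I) (hb : ContinuousOn b I) (hc : ContinuousOn c I)
    (hd : ContinuousOn d I) (hf₁ : ContinuousOn f₁ I) (hf₂ : ContinuousOn f₂ I)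
    (hg₁ : ContinuousOn g₁ I) (hg₂ : ContinuousOn g₂ I)
    (μ α β γ δ₁ δ₂ ε₁ ε₂ κ₁ κ₂ : ℝ → ℝ)
    (hμpos : ∀ t ∈ I, 0 < μ t)
    (hα : ∀ t ∈ I, HasDerivAt α (-(b t + 2 * c t * α t + 4 * a t * (α t) ^ 2)) t)
    (hβ : ∀ t ∈ I, HasDerivAt β (-((c t + 4 * a t * α t) * β t)) t)
    (hγ : ∀ t ∈ I, HasDerivAt γ (-(l₀ * a t * (β t) ^ 2)) t)
    (hδ₁ : ∀ t ∈ I, HasDerivAt δ₁ (f₁ t + 2 * g₁ t * α t - (c t + 4 * a t * α t) * δ₁ t) t)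
    (hδ₂ : ∀ t ∈ I, HasDerivAt δ₂ (f₂ t + 2 * g₂ t * α t - (c t + 4 * a t * α t) * δ₂ t) t)
    (hε₁ : ∀ t ∈ I, HasDerivAt ε₁ ((g₁ t - 2 * a t * δ₁ t) * β t) t)
    (hε₂ : ∀ t ∈ I, HasDerivAt ε₂ ((g₂ t - 2 * a t * δ₂ t) * β t) t)
    (hκ₁ : ∀ t ∈ I, HasDerivAt κ₁ (g₁ t * δ₁ t - a t * (δ₁ t) ^ 2) t)
    (hκ₂ : ∀ t ∈ I, HasDerivAt κ₂ (g₂ t * δ₂ t - a t * (δ₂ t) ^ 2) t)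
    (hμ : ∀ t ∈ I, HasDerivAt μ (2 * μ t * (2 * a t * α t + d t)) t)
    (h : ℝ → ℝ) (hh : ∀ t, h t = h₀ * a t * (β t) ^ 2 * (μ t) ^ (2 * s))
    (χ : ℝ → ℝ → ℝ → ℂ)
    (hχsmooth : ContDiff ℝ 2 (fun p : ℝ × ℝ × ℝ => χ p.1 p.2.1 p.2.2))
    (hχ : ∀ ξ η τ : ℝ,
      Complex.I * deriv (fun τ' => χ ξ η τ') τ
        - (l₀ : ℂ) * (deriv (fun ξ' => deriv (fun ξ'' => χ ξ'' η τ) ξ') ξ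
            + deriv (fun η' => deriv (fun η'' => χ ξ η'' τ) η') η)
        = -(l₀ : ℂ) * (h₀ : ℂ) * ((‖χ ξ η τ‖ ^ (2 * s) : ℝ) : ℂ) * χ ξ η τ)
    (ψ : ℝ → ℝ → ℝ → ℂ)
    (hψ : ∀ x y t, ψ x y t = ((μ t)⁻¹ : ℝ) *
      Complex.exp (Complex.I *
        ((α t * (x ^ 2 + y ^ 2) + δ₁ t * x + δ₂ t * y + κ₁ t + κ₂ t : ℝ) : ℂ)) *
      χ (β t * x + ε₁ t) (β t * y + ε₂ t) (γ t)) :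
    ∀ x y : ℝ, ∀ t ∈ I,
      Complex.I * deriv (fun τ => ψ x y τ) t =
        -(a t : ℂ) * (deriv (fun x' => deriv (fun x'' => ψ x'' y t) x') x
            + deriv (fun y' => deriv (fun y'' => ψ x y'' t) y') y)
        + (b t : ℂ) * ((x : ℂ) ^ 2 + (y : ℂ) ^ 2) * ψ x y t
        - Complex.I * (c t : ℂ) * ((x : ℂ) * deriv (fun x' => ψ x' y t) x
            + (y : ℂ) * deriv (fun y' => ψ x y' t) y)
        - 2 * Complex.I * (d t : ℂ) * ψ x y t
        - ((f₁ t : ℂ) * (x : ℂ) + (f₂ t : ℂ) * (y : ℂ)) * ψ x y t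
        + Complex.I * ((g₁ t : ℂ) * deriv (fun x' => ψ x' y t) x
            + (g₂ t : ℂ) * deriv (fun y' => ψ x y' t) y)
        + (h t : ℂ) * ((‖ψ x y t‖ ^ (2 * s) : ℝ) : ℂ) * ψ x y t :=
  stmt13_general l₀ hl₀ h₀ s I a b c d f₁ f₂ g₁ g₂ μ α β γ δ₁ δ₂ ε₁ ε₂ κ₁ κ₂ hμpos hα hβ hγ hδ₁ hδ₂
    hε₁ hε₂ hκ₁ hκ₂ hμ h hh χ hχsmooth hχ ψ hψ
end

section
/- For every A ∈ ℝ, the function u : ℝ × ℝ → ℂ defined by u(t,x) = A·exp(2iA²t)·(3 + 16iA²t − 16A⁴t² − 4A²x²)/(1 + 16A⁴t² + 4A²x²) satisfies at every point the equation i·∂u/∂t + ∂²u/∂x² + 2·|u|²·u = 0. -/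
/-!
The cubic NLS `i u_t + u_xx + 2|u|²u = 0` is invariant under the scaling
`u ↦ A u(A² t, A x)`, which multiplies the residual by `A³`. Since
`3 + 16iA²t - 16A⁴t² - 4A²x² = 4(1 + 4iA²t) - D(A²t, Ax)` with `D(t, x) = 1 + 16t² + 4x²`,
the given `u` is the rescaling of the amplitude-one Peregrine soliton
`e^{2it} (4(1 + 4it)/D - 1)`. For the latter, the residual becomes a rational identity in `t`, `x`
once the derivatives are computed and `|u|² = ((D - 4)² + 256 t²)/D²` is substituted.
-/

open Complex

noncomputable def nlsResidual (u : ℝ → ℝ → ℂ) (t x : ℝ) : ℂ :=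
  I * deriv (fun t' => u t' x) t + deriv (fun x' => deriv (fun x'' => u t x'') x') x
    + 2 * ((‖u t x‖ ^ 2 : ℝ) : ℂ) * u t x

-- No differentiability of `v` is needed: `deriv_comp_mul_left` also covers the junk value `0`.
theorem nlsResidual_rescale (v : ℝ → ℝ → ℂ) (A t x : ℝ) :
    nlsResidual (fun t x => A * v (A ^ 2 * t) (A * x)) t x
      = A ^ 3 * nlsResidual v (A ^ 2 * t) (A * x) := by
  have hdt : deriv (fun t' => v (A ^ 2 * t') (A * x)) t
      = ((A ^ 2 : ℝ) : ℂ) * deriv (fun s => v s (A * x)) (A ^ 2 * t) := by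
    rw [← Complex.real_smul]
    exact deriv_comp_mul_left (A ^ 2) (fun s => v s (A * x)) t
  have hdx (f : ℝ → ℂ) : deriv (fun y => f (A * y)) = fun y => A * deriv f (A * y) := by
    funext y
    rw [← Complex.real_smul]
    exact deriv_comp_mul_left A f y
  simp only [nlsResidual, deriv_const_mul_field', hdt, hdx, norm_mul, Complex.norm_real,
    Real.norm_eq_abs, mul_pow, sq_abs]
  push_cast
  ring

noncomputable def peregrineDenom (t x : ℝ) : ℝ := 1 + 16 * t ^ 2 + 4 * x ^ 2

theorem peregrineDenom_pos (t x : ℝ) : 0 < peregrineDenom t x := by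
  unfold peregrineDenom
  positivity

noncomputable def peregrine (t x : ℝ) : ℂ :=
  exp (2 * I * t) * (4 * (1 + 4 * I * t) / peregrineDenom t x - 1)

theorem hasDerivAt_peregrineDenom_space (t x : ℝ) :
    HasDerivAt (fun y => (peregrineDenom t y : ℂ)) (8 * x) x := by
  unfold peregrineDenom
  push_cast
  refine ((((hasDerivAt_id' (x : ℂ)).pow 2).const_mul 4).const_add _).comp_ofReal.congr_deriv ?_
  simp only [Nat.cast_ofNat]
  ring

theorem hasDerivAt_peregrineDenom_time (t x : ℝ) :
    HasDerivAt (fun s => (peregrineDenom s x : ℂ)) (32 * t) t := by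
  unfold peregrineDenom
  push_cast
  refine (((((hasDerivAt_id' (t : ℂ)).pow 2).const_mul 16).const_add 1).add_const
    _).comp_ofReal.congr_deriv ?_
  simp only [Nat.cast_ofNat]
  ring

theorem hasDerivAt_peregrine_space (t x : ℝ) :
    HasDerivAt (peregrine t)
      (-32 * exp (2 * I * t) * (1 + 4 * I * t) * x / peregrineDenom t x ^ 2) x := by
  have hD : (peregrineDenom t x : ℂ) ≠ 0 := mod_cast (peregrineDenom_pos t x).ne'
  refine ((((hasDerivAt_const x (4 * (1 + 4 * I * t))).fun_div
    (hasDerivAt_peregrineDenom_space t x) hD).sub_const 1).const_mul _).congr_deriv ?_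
  field_simp
  ring

theorem deriv_peregrine_space (t : ℝ) :
    deriv (peregrine t) = fun x =>
      -32 * exp (2 * I * t) * (1 + 4 * I * t) * x / peregrineDenom t x ^ 2 :=
  funext fun x => (hasDerivAt_peregrine_space t x).deriv

theorem hasDerivAt_deriv_peregrine_space (t x : ℝ) :
    HasDerivAt (deriv (peregrine t))
      (-32 * exp (2 * I * t) * (1 + 4 * I * t) * (peregrineDenom t x - 16 * x ^ 2)
        / peregrineDenom t x ^ 3) x := by
  have hD : (peregrineDenom t x : ℂ) ≠ 0 := mod_cast (peregrineDenom_pos t x).ne'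
  rw [deriv_peregrine_space]
  refine (((hasDerivAt_id' (x : ℂ)).comp_ofReal.const_mul _).fun_div
    ((hasDerivAt_peregrineDenom_space t x).fun_pow 2) (pow_ne_zero 2 hD)).congr_deriv ?_
  field_simp
  ring

theorem hasDerivAt_peregrine_time (t x : ℝ) :
    HasDerivAt (fun s => peregrine s x)
      (exp (2 * I * t) * (2 * I * (4 * (1 + 4 * I * t) / peregrineDenom t x - 1)
        + 4 * (4 * I * peregrineDenom t x - 32 * t * (1 + 4 * I * t))
          / peregrineDenom t x ^ 2)) t := by
  have hD : (peregrineDenom t x : ℂ) ≠ 0 := mod_cast (peregrineDenom_pos t x).ne'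
  have hexp : HasDerivAt (fun s : ℝ => exp (2 * I * s)) (exp (2 * I * t) * (2 * I)) t := by
    simpa using ((hasDerivAt_id' (t : ℂ)).const_mul (2 * I)).cexp.comp_ofReal
  have hnum : HasDerivAt (fun s : ℝ => 4 * (1 + 4 * I * s)) (4 * (4 * I)) t := by
    simpa using
      ((((hasDerivAt_id' (t : ℂ)).const_mul (4 * I)).const_add 1).const_mul 4).comp_ofReal
  refine (hexp.fun_mul ((hnum.fun_div (hasDerivAt_peregrineDenom_time t x) hD).sub_const
    1)).congr_deriv ?_
  field_simp

theorem sq_norm_peregrine (t x : ℝ) :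
    ‖peregrine t x‖ ^ 2
      = ((peregrineDenom t x - 4) ^ 2 + 256 * t ^ 2) / peregrineDenom t x ^ 2 := by
  have hD : (peregrineDenom t x : ℂ) ≠ 0 := mod_cast (peregrineDenom_pos t x).ne'
  have hform : peregrine t x = exp ((2 * t : ℝ) * I)
      * (((4 - peregrineDenom t x : ℝ) + (16 * t : ℝ) * I) / peregrineDenom t x) := by
    unfold peregrine
    push_cast
    field_simp
    ring_nf
  rw [hform, norm_mul, norm_exp_ofReal_mul_I, one_mul, norm_div, Complex.norm_real, div_pow,
    Complex.sq_norm, normSq_add_mul_I, Real.norm_eq_abs, sq_abs]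
  ring

theorem nlsResidual_peregrine (t x : ℝ) : nlsResidual peregrine t x = 0 := by
  have hD : (peregrineDenom t x : ℂ) ≠ 0 := mod_cast (peregrineDenom_pos t x).ne'
  rw [nlsResidual, (hasDerivAt_peregrine_time t x).deriv,
    (hasDerivAt_deriv_peregrine_space t x).deriv, sq_norm_peregrine, peregrine]
  push_cast
  field_simp
  rw [peregrineDenom]
  push_cast
  ring_nf
  simp only [I_sq, I_pow_three]
  ring

/-- The Peregrine soliton solves the standard focusing cubic NLS
`i u_t + u_xx + 2|u|²u = 0`. -/
theorem stmt14
    (A : ℝ)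
    (u : ℝ → ℝ → ℂ)
    (hu : ∀ t x : ℝ, u t x = (A : ℂ) * Complex.exp (2 * Complex.I * (A : ℂ) ^ 2 * (t : ℂ)) *
      ((3 + 16 * Complex.I * (A : ℂ) ^ 2 * (t : ℂ) - 16 * (A : ℂ) ^ 4 * (t : ℂ) ^ 2
          - 4 * (A : ℂ) ^ 2 * (x : ℂ) ^ 2) /
        (1 + 16 * (A : ℂ) ^ 4 * (t : ℂ) ^ 2 + 4 * (A : ℂ) ^ 2 * (x : ℂ) ^ 2))) :
    ∀ t x : ℝ,
      Complex.I * deriv (fun t' => u t' x) t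
        + deriv (fun x' => deriv (fun x'' => u t x'') x') x
        + 2 * ((‖u t x‖ ^ 2 : ℝ) : ℂ) * u t x = 0 := by
  have hu_rescale : u = fun t x => (A : ℂ) * peregrine (A ^ 2 * t) (A * x) := by
    funext t x
    have hden :
        peregrineDenom (A ^ 2 * t) (A * x) = 1 + 16 * A ^ 4 * t ^ 2 + 4 * A ^ 2 * x ^ 2 := by
      rw [peregrineDenom]
      ring
    have hD : ((1 + 16 * A ^ 4 * t ^ 2 + 4 * A ^ 2 * x ^ 2 : ℝ) : ℂ) ≠ 0 := by
      rw [← hden]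
      exact_mod_cast (peregrineDenom_pos _ _).ne'
    rw [hu, peregrine, hden]
    push_cast at hD ⊢
    rw [div_sub_one hD]
    ring_nf
  intro t x
  have h := nlsResidual_rescale peregrine A t x
  rwa [nlsResidual_peregrine, mul_zero, ← hu_rescale] at h
end

section
/- Fix real parameters A, δ₀, ε₀, γ₀, κ₀. Then the function ψ defined for t > 0 and x ∈ ℝ by ψ(t,x) = (A/sqrt(1 + sinh(t))) · tanh( A·( (2x·csch(t) − 2δ₀)/(csch(t) + 1) + ε₀ ) ) · exp( i·(−x² + 2δ₀·x·csch(t) − δ₀² − 8A²)/(2 + 2·csch(t)) ) · exp( i·(κ₀ + 2A²·γ₀) ) satisfies at every (t,x) with t > 0 the nonautonomous nonlinear Schrödinger equation i·ψ_t = −(1/2)·cosh(t)·ψ_xx + (1/2)·cosh(t)·(x² − i)·ψ − i·x·cosh(t)·ψ_x + ( 4·cosh(t)/(1 + sinh(t)) )·|ψ|²·ψ. -/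
/-!
Write the wave as `ψ = w e^{iθ}` with real modulus `w` and real phase `θ`. Dividing the equation
by `e^{iθ}`, its imaginary part is a transport equation for `w` and its real part an eikonal
equation for `θ` carrying the cubic term. For the dark soliton, with `s = sinh t`, one has
`w = A (1 + s)^{-1/2} tanh X`, where `X` and `θ` are rational in `s` and `x`. Since
`ds/dt = cosh t` and `tanh' = 1 - tanh²`, both real equations become identities between rational
functions of `s`, `x`, `tanh X`; the cubic term balances because `w² (1 + s) = A² tanh² X`.
-/

open Complex

theorem Real.hasDerivAt_tanh (x : ℝ) : HasDerivAt Real.tanh (1 - Real.tanh x ^ 2) x := by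
  have h := (Real.hasDerivAt_sinh x).div (Real.hasDerivAt_cosh x) (Real.cosh_pos x).ne'
  rw [show Real.sinh / Real.cosh = Real.tanh from
    funext fun y => (Real.tanh_eq_sinh_div_cosh y).symm] at h
  refine h.congr_deriv ?_
  rw [Real.tanh_eq_sinh_div_cosh]
  field_simp

theorem HasDerivAt.mul_cexp_I_mul_ofReal {f : ℝ → ℂ} {φ : ℝ → ℝ} {φ' x : ℝ} {f' : ℂ}
    (hf : HasDerivAt f f' x) (hφ : HasDerivAt φ φ' x) :
    HasDerivAt (fun y => f y * cexp (I * (φ y : ℂ)))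
      ((f' + I * (f x * φ')) * cexp (I * (φ x : ℂ))) x := by
  refine (hf.fun_mul (hφ.ofReal_comp.const_mul I).cexp).congr_deriv ?_
  ring

section NLS

def NonautonomousNLSAt (c g : ℝ) (ψ : ℝ → ℝ → ℂ) (t x : ℝ) : Prop :=
  I * deriv (fun t' => ψ t' x) t =
    -(1 / 2 : ℂ) * (c : ℂ) * deriv (fun x' => deriv (fun x'' => ψ t x'') x') x
    + (1 / 2 : ℂ) * (c : ℂ) * ((x : ℂ) ^ 2 - I) * ψ t x
    - I * (x : ℂ) * (c : ℂ) * deriv (fun x' => ψ t x') x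
    + (g : ℂ) * ((‖ψ t x‖ ^ 2 : ℝ) : ℂ) * ψ t x

theorem NonautonomousNLSAt.congr_of_eventuallyEq {c g t x : ℝ} {ψ₀ ψ : ℝ → ℝ → ℂ}
    (h : NonautonomousNLSAt c g ψ₀ t x) (hψ : ∀ᶠ t' in nhds t, ψ t' = ψ₀ t') :
    NonautonomousNLSAt c g ψ t x := by
  have hderiv : deriv (fun t' => ψ t' x) t = deriv (fun t' => ψ₀ t' x) t :=
    Filter.EventuallyEq.deriv_eq (hψ.mono fun _ h => congrFun h x)
  rw [NonautonomousNLSAt, hderiv, hψ.self_of_nhds]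
  exact h

noncomputable def amplitudePhase (w θ : ℝ → ℝ → ℝ) (t x : ℝ) : ℂ :=
  w t x * cexp (I * θ t x)

theorem norm_amplitudePhase_sq (w θ : ℝ → ℝ → ℝ) (t x : ℝ) :
    ‖amplitudePhase w θ t x‖ ^ 2 = w t x ^ 2 := by
  simp [amplitudePhase, sq_abs]

theorem nonautonomousNLSAt_amplitudePhase {w θ : ℝ → ℝ → ℝ} {wx θx : ℝ → ℝ}
    {t x c g wt θt wxx θxx : ℝ}
    (hwt : HasDerivAt (w · x) wt t) (hθt : HasDerivAt (θ · x) θt t)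
    (hwx : ∀ y, HasDerivAt (w t) (wx y) y) (hθx : ∀ y, HasDerivAt (θ t) (θx y) y)
    (hwxx : HasDerivAt wx wxx x) (hθxx : HasDerivAt θx θxx x)
    (htransport : wt = -(c / 2) * (2 * wx x * θx x + w t x * θxx) - c / 2 * w t x
      - x * c * wx x)
    (heikonal : -(w t x * θt) = -(c / 2) * (wxx - w t x * θx x ^ 2) + c / 2 * x ^ 2 * w t x
      + x * c * w t x * θx x + g * w t x ^ 3) :
    NonautonomousNLSAt c g (amplitudePhase w θ) t x := by
  have hψx (y : ℝ) : HasDerivAt (amplitudePhase w θ t)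
      ((wx y + I * (w t y * θx y)) * cexp (I * θ t y)) y :=
    HasDerivAt.mul_cexp_I_mul_ofReal (hwx y).ofReal_comp (hθx y)
  have hψt : HasDerivAt (amplitudePhase w θ · x)
      ((wt + I * (w t x * θt)) * cexp (I * θ t x)) t :=
    HasDerivAt.mul_cexp_I_mul_ofReal hwt.ofReal_comp hθt
  have hψxx : HasDerivAt (fun y => (wx y + I * (w t y * θx y)) * cexp (I * θ t y))
      ((wxx + I * (wx x * θx x + w t x * θxx) + I * ((wx x + I * (w t x * θx x)) * θx x))
        * cexp (I * θ t x)) x := by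
    refine HasDerivAt.mul_cexp_I_mul_ofReal ?_ (hθx x)
    refine (hwxx.ofReal_comp.fun_add
      (((hwx x).ofReal_comp.fun_mul hθxx.ofReal_comp).const_mul I)).congr_deriv ?_
    ring
  have hderiv : (fun y => deriv (amplitudePhase w θ t) y) =
      fun y => (wx y + I * (w t y * θx y)) * cexp (I * θ t y) := funext fun y => (hψx y).deriv
  rw [NonautonomousNLSAt, hψt.deriv, (hψx x).deriv, hderiv, hψxx.deriv, norm_amplitudePhase_sq,
    amplitudePhase]
  have htransport' := congrArg (fun r : ℝ => (r : ℂ)) htransport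
  have heikonal' := congrArg (fun r : ℝ => (r : ℂ)) heikonal
  push_cast at htransport' heikonal' ⊢
  linear_combination cexp (I * θ t x) * (I * htransport' + heikonal')
    + w t x * (θt + c * θx x * x + c * θx x ^ 2 / 2) * cexp (I * θ t x) * I_sq

end NLS

section DarkSoliton

variable (A δ ε : ℝ)

noncomputable def solitonAmp (s : ℝ) : ℝ := A / √(1 + s)

noncomputable def solitonArg (s x : ℝ) : ℝ := A * ((2 * x - 2 * δ * s) / (1 + s) + ε)

noncomputable def solitonPhase (s x : ℝ) : ℝ :=
  (2 * δ * x - s * (x ^ 2 + δ ^ 2 + 8 * A ^ 2)) / (2 * (1 + s))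

noncomputable def darkSolitonModulus (t x : ℝ) : ℝ :=
  solitonAmp A (Real.sinh t) * Real.tanh (solitonArg A δ ε (Real.sinh t) x)

variable {A δ ε}

theorem hasDerivAt_solitonAmp {s : ℝ} (hs : 0 < 1 + s) :
    HasDerivAt (solitonAmp A) (-(solitonAmp A s / (2 * (1 + s)))) s := by
  have h := (hasDerivAt_const s A).div
    ((Real.hasDerivAt_sqrt hs.ne').comp s ((hasDerivAt_id' s).const_add 1))
    (Real.sqrt_pos.mpr hs).ne'
  refine h.congr_deriv ?_
  simp only [Function.comp_apply]
  rw [solitonAmp]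
  field_simp
  rw [Real.sq_sqrt hs.le]
  ring

theorem hasDerivAt_solitonArg_snd (s x : ℝ) :
    HasDerivAt (solitonArg A δ ε s) (2 * A / (1 + s)) x := by
  have h := (((((hasDerivAt_id' x).const_mul 2).sub_const (2 * δ * s)).div_const (1 + s)).add_const
    ε).const_mul A
  refine h.congr_deriv ?_
  ring

theorem hasDerivAt_solitonArg_fst {s : ℝ} (x : ℝ) (hs : 1 + s ≠ 0) :
    HasDerivAt (solitonArg A δ ε · x) (-(2 * A * (x + δ)) / (1 + s) ^ 2) s := by
  have h := (((((hasDerivAt_id' s).const_mul (2 * δ)).const_sub (2 * x)).div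
    ((hasDerivAt_id' s).const_add 1) hs).add_const ε).const_mul A
  refine h.congr_deriv ?_
  field_simp
  ring

theorem hasDerivAt_solitonPhase_snd (s x : ℝ) :
    HasDerivAt (solitonPhase A δ s) ((δ - s * x) / (1 + s)) x := by
  have h := (((hasDerivAt_id' x).const_mul (2 * δ)).fun_sub
    ((((hasDerivAt_pow 2 x).add_const (δ ^ 2)).add_const (8 * A ^ 2)).const_mul s)).div_const
    (2 * (1 + s))
  refine h.congr_deriv ?_
  rw [← mul_div_mul_left (δ - s * x) (1 + s) two_ne_zero]
  ring

theorem hasDerivAt_solitonPhase_fst {s : ℝ} (x : ℝ) (hs : 1 + s ≠ 0) :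
    HasDerivAt (solitonPhase A δ · x) (-((x + δ) ^ 2 + 8 * A ^ 2) / (2 * (1 + s) ^ 2)) s := by
  have h := (((hasDerivAt_id' s).mul_const (x ^ 2 + δ ^ 2 + 8 * A ^ 2)).const_sub (2 * δ * x)).div
    (((hasDerivAt_id' s).const_add 1).const_mul 2) (by simpa using hs)
  refine h.congr_deriv ?_
  field_simp
  ring

theorem hasDerivAt_darkSolitonModulus_snd (t y : ℝ) :
    HasDerivAt (darkSolitonModulus A δ ε t)
      (solitonAmp A (Real.sinh t) * (1 - Real.tanh (solitonArg A δ ε (Real.sinh t) y) ^ 2)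
        * (2 * A / (1 + Real.sinh t))) y := by
  have h := ((Real.hasDerivAt_tanh _).comp y
    (hasDerivAt_solitonArg_snd (A := A) (δ := δ) (ε := ε) (Real.sinh t) y)).const_mul
    (solitonAmp A (Real.sinh t))
  exact h.congr_deriv (by ring)

theorem hasDerivAt_darkSolitonModulus_snd_snd (t x : ℝ) :
    HasDerivAt (fun y => solitonAmp A (Real.sinh t)
        * (1 - Real.tanh (solitonArg A δ ε (Real.sinh t) y) ^ 2) * (2 * A / (1 + Real.sinh t)))
      (-(2 * solitonAmp A (Real.sinh t) * Real.tanh (solitonArg A δ ε (Real.sinh t) x)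
        * (1 - Real.tanh (solitonArg A δ ε (Real.sinh t) x) ^ 2)
        * (2 * A / (1 + Real.sinh t)) ^ 2))
      x := by
  have hT := (Real.hasDerivAt_tanh _).comp x
    (hasDerivAt_solitonArg_snd (A := A) (δ := δ) (ε := ε) (Real.sinh t) x)
  have h := (((hT.pow 2).const_sub 1).const_mul (solitonAmp A (Real.sinh t))).mul_const
    (2 * A / (1 + Real.sinh t))
  refine h.congr_deriv ?_
  simp only [Function.comp_apply]
  ring

theorem hasDerivAt_darkSolitonModulus_fst {t : ℝ} (x : ℝ) (hs : 0 < 1 + Real.sinh t) :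
    HasDerivAt (darkSolitonModulus A δ ε · x)
      (Real.cosh t * (-(solitonAmp A (Real.sinh t) / (2 * (1 + Real.sinh t)))
          * Real.tanh (solitonArg A δ ε (Real.sinh t) x)
        + solitonAmp A (Real.sinh t) * (1 - Real.tanh (solitonArg A δ ε (Real.sinh t) x) ^ 2)
          * (-(2 * A * (x + δ)) / (1 + Real.sinh t) ^ 2))) t := by
  have ha := (hasDerivAt_solitonAmp (A := A) hs).comp t (Real.hasDerivAt_sinh t)
  have hX := (Real.hasDerivAt_tanh _).comp t
    ((hasDerivAt_solitonArg_fst (A := A) (δ := δ) (ε := ε) x hs.ne').comp t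
      (Real.hasDerivAt_sinh t))
  refine (ha.mul hX).congr_deriv ?_
  simp only [Function.comp_apply]
  ring

theorem darkSoliton_transport_identity {A δ x s c a T : ℝ} (hs : 1 + s ≠ 0) :
    c * (-(a / (2 * (1 + s))) * T + a * (1 - T ^ 2) * (-(2 * A * (x + δ)) / (1 + s) ^ 2)) =
      -(c / 2) * (2 * (a * (1 - T ^ 2) * (2 * A / (1 + s))) * ((δ - s * x) / (1 + s))
        + a * T * (-s / (1 + s))) - c / 2 * (a * T)
      - x * c * (a * (1 - T ^ 2) * (2 * A / (1 + s))) := by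
  field_simp
  ring

theorem darkSoliton_eikonal_identity {A δ x s c a T : ℝ} (hs : 1 + s ≠ 0)
    (ha : a ^ 2 * (1 + s) = A ^ 2) :
    -(a * T * (-((x + δ) ^ 2 + 8 * A ^ 2) / (2 * (1 + s) ^ 2) * c)) =
      -(c / 2) * (-(2 * a * T * (1 - T ^ 2) * (2 * A / (1 + s)) ^ 2)
        - a * T * ((δ - s * x) / (1 + s)) ^ 2)
      + c / 2 * x ^ 2 * (a * T) + x * c * (a * T) * ((δ - s * x) / (1 + s))
      + 4 * c / (1 + s) * (a * T) ^ 3 := by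
  linear_combination (norm := skip) (-4 * c * a * T ^ 3 / (1 + s) ^ 2) * ha
  field_simp
  ring

theorem darkSoliton_nonautonomousNLSAt (A δ ε K : ℝ) {t : ℝ} (x : ℝ) (ht : 0 < t) :
    NonautonomousNLSAt (Real.cosh t) (4 * Real.cosh t / (1 + Real.sinh t))
      (amplitudePhase (darkSolitonModulus A δ ε) fun t x => solitonPhase A δ (Real.sinh t) x + K)
      t x := by
  have hs : 0 < 1 + Real.sinh t := by linarith [Real.sinh_pos_iff.mpr ht]
  have hamp : solitonAmp A (Real.sinh t) ^ 2 * (1 + Real.sinh t) = A ^ 2 := by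
    rw [solitonAmp, div_pow, Real.sq_sqrt hs.le]
    field_simp
  exact nonautonomousNLSAt_amplitudePhase (hasDerivAt_darkSolitonModulus_fst x hs)
    (((hasDerivAt_solitonPhase_fst x hs.ne').comp t (Real.hasDerivAt_sinh t)).add_const K)
    (hasDerivAt_darkSolitonModulus_snd t)
    (fun y => (hasDerivAt_solitonPhase_snd _ y).add_const K)
    (hasDerivAt_darkSolitonModulus_snd_snd t x)
    (((hasDerivAt_const_mul (Real.sinh t)).const_sub δ).div_const _)
    (darkSoliton_transport_identity hs.ne') (darkSoliton_eikonal_identity hs.ne' hamp)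

theorem solitonArg_eq_of_csch {s : ℝ} (x : ℝ) (hs : 0 < s) :
    A * ((2 * x * (1 / s) - 2 * δ) / (1 / s + 1) + ε) = solitonArg A δ ε s x := by
  have : 1 + s ≠ 0 := by linarith
  rw [solitonArg]
  field_simp

theorem solitonPhase_eq_of_csch {s : ℝ} (x : ℝ) (hs : 0 < s) :
    (-x ^ 2 + 2 * δ * x * (1 / s) - δ ^ 2 - 8 * A ^ 2) / (2 + 2 * (1 / s)) =
      solitonPhase A δ s x := by
  have : 1 + s ≠ 0 := by linarith
  rw [solitonPhase]
  field_simp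
  ring

end DarkSoliton

/-- The explicit dark-soliton solution (g2) of Section 4.2: for `t > 0` the stated
function solves `i ψ_t = -½ cosh t ψ_xx + ½ cosh t (x² - i) ψ - i x cosh t ψ_x
+ (4 cosh t/(1 + sinh t)) |ψ|² ψ`. -/
theorem stmt16
    (A δ₀ ε₀ γ₀ κ₀ : ℝ)
    (ψ : ℝ → ℝ → ℂ)
    (hψ : ∀ t : ℝ, 0 < t → ∀ x : ℝ, ψ t x =
      ((A / Real.sqrt (1 + Real.sinh t) : ℝ) : ℂ) *
      ((Real.tanh (A * ((2 * x * (1 / Real.sinh t) - 2 * δ₀) / (1 / Real.sinh t + 1)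
          + ε₀)) : ℝ) : ℂ) *
      Complex.exp (Complex.I *
        (((-x ^ 2 + 2 * δ₀ * x * (1 / Real.sinh t) - δ₀ ^ 2 - 8 * A ^ 2) /
          (2 + 2 * (1 / Real.sinh t)) : ℝ) : ℂ)) *
      Complex.exp (Complex.I * ((κ₀ + 2 * A ^ 2 * γ₀ : ℝ) : ℂ))) :
    ∀ t : ℝ, 0 < t → ∀ x : ℝ,
      Complex.I * deriv (fun t' => ψ t' x) t =
        -(1 / 2 : ℂ) * (Real.cosh t : ℂ) * deriv (fun x' => deriv (fun x'' => ψ t x'') x') x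
        + (1 / 2 : ℂ) * (Real.cosh t : ℂ) * ((x : ℂ) ^ 2 - Complex.I) * ψ t x
        - Complex.I * (x : ℂ) * (Real.cosh t : ℂ) * deriv (fun x' => ψ t x') x
        + ((4 * Real.cosh t / (1 + Real.sinh t) : ℝ) : ℂ) *
          ((‖ψ t x‖ ^ 2 : ℝ) : ℂ) * ψ t x := by
  intro t ht x
  refine NonautonomousNLSAt.congr_of_eventuallyEq
    (darkSoliton_nonautonomousNLSAt A δ₀ ε₀ (κ₀ + 2 * A ^ 2 * γ₀) x ht) ?_
  filter_upwards [lt_mem_nhds ht] with t' ht'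
  funext y
  have hs : 0 < Real.sinh t' := Real.sinh_pos_iff.mpr ht'
  rw [hψ t' ht' y, solitonArg_eq_of_csch y hs, solitonPhase_eq_of_csch y hs, amplitudePhase,
    darkSolitonModulus, solitonAmp, mul_assoc _ (cexp _), ← Complex.exp_add, ← mul_add]
  push_cast
  ring
end

section
/- Fix real parameters v < 0 and κ₀. Then the function ψ : ℝ × ℝ → ℂ defined by ψ(t,x) = sqrt(−2v/3) · sech( sqrt(−v)·x ) · exp( (3/2)·(cos(t) − 1) + i·( (x²/4)·sin(t) + κ₀ − v·t ) ) satisfies at every (t,x) ∈ ℝ × ℝ the equation i·ψ_t = −ψ_xx + (x²/4)·(sin²(t) − cos(t))·ψ + i·x·sin(t)·ψ_x − i·sin(t)·ψ − 3·e^{3 − 3·cos(t)}·|ψ|²·ψ. -/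
/-!
The bright soliton `u(t, x) = a sech(b x) e^{i(κ₀ - v t)}` with `a² = -2v/3`, `b² = -v` solves the
focusing NLS `i u_t + u_xx + 3|u|²u = 0`, because the profile `φ = a sech(b x)` satisfies
`φ'' + v φ + 3 φ³ = 0`. The gauge transformation of Lemma 4 multiplies any solution of the NLS by
`μ(t)^{-1/2} e^{i α(t) x²}`, with `μ(t) = e^{3 - 3 cos t}` and `α(t) = sin(t)/4`; by the product
rule the result solves the equation for `ψ`, where the coefficient `μ(t)` of the cubic term
cancels `|μ(t)^{-1/2}|²`.
-/

open Complex

lemma hasDerivAt_div_cosh (a b y : ℝ) :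
    HasDerivAt (fun y => a / Real.cosh (b * y))
      (-(a * b) * Real.sinh (b * y) / Real.cosh (b * y) ^ 2) y :=
  ((hasDerivAt_const y a).div ((hasDerivAt_id y).const_mul b).cosh
    (Real.cosh_pos _).ne').congr_deriv (by simp; ring)

lemma hasDerivAt_sinh_div_cosh_sq (a b y : ℝ) :
    HasDerivAt (fun y => -(a * b) * Real.sinh (b * y) / Real.cosh (b * y) ^ 2)
      (a * b ^ 2 * (1 / Real.cosh (b * y) - 2 / Real.cosh (b * y) ^ 3)) y := by
  have hc := (Real.cosh_pos (b * y)).ne'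
  have hs := (((hasDerivAt_id y).const_mul b).sinh).const_mul (-(a * b))
  have hd := (((hasDerivAt_id y).const_mul b).cosh).fun_pow 2
  refine (hs.div hd (pow_ne_zero 2 hc)).congr_deriv ?_
  simp only [id, mul_one, Nat.cast_ofNat]
  field_simp
  linear_combination (-2 * a * b ^ 2 * Real.cosh (b * y)) * Real.cosh_sq_sub_sinh_sq (b * y)

lemma div_cosh_ode {a b v : ℝ} (ha : a ^ 2 = -2 * v / 3) (hb : b ^ 2 = -v) (y : ℝ) :
    a * b ^ 2 * (1 / Real.cosh (b * y) - 2 / Real.cosh (b * y) ^ 3)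
      + v * (a / Real.cosh (b * y)) + 3 * (a / Real.cosh (b * y)) ^ 3 = 0 := by
  have hc := (Real.cosh_pos (b * y)).ne'
  rw [hb]
  field_simp
  linear_combination 3 * a * ha

def IsFocusingNLSSolutionAt (u : ℝ → ℝ → ℂ) (t x : ℝ) : Prop :=
  ∃ (ut : ℂ) (ux : ℝ → ℂ) (uxx : ℂ), HasDerivAt (fun s => u s x) ut t ∧
    (∀ y, HasDerivAt (u t) (ux y) y) ∧ HasDerivAt ux uxx x ∧
    I * ut + uxx + 3 * ((‖u t x‖ ^ 2 : ℝ) : ℂ) * u t x = 0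

lemma isFocusingNLSSolutionAt_standingWave {φ φ' : ℝ → ℝ} {φ'' v κ₀ t x : ℝ}
    (hφ : ∀ y, HasDerivAt φ (φ' y) y) (hφ' : HasDerivAt φ' φ'' x)
    (hode : φ'' + v * φ x + 3 * φ x ^ 3 = 0) :
    IsFocusingNLSSolutionAt (fun t x => (φ x : ℂ) * exp (I * ((κ₀ - v * t : ℝ) : ℂ))) t x := by
  have hphase : HasDerivAt (fun s => κ₀ - v * s) (-v) t :=
    ((hasDerivAt_id t).const_mul v).const_sub κ₀ |>.congr_deriv (by simp)
  refine ⟨_, _, _, (hphase.ofReal_comp.const_mul I).cexp.const_mul (φ x : ℂ),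
    fun y => (hφ y).ofReal_comp.mul_const _, hφ'.ofReal_comp.mul_const _, ?_⟩
  rw [norm_mul, norm_exp_I_mul_ofReal, mul_one, Complex.norm_real, Real.norm_eq_abs, sq_abs]
  have hodeC : (φ'' : ℂ) + v * φ x + 3 * (φ x : ℂ) ^ 3 = 0 := by exact_mod_cast hode
  push_cast
  linear_combination exp (I * (κ₀ - v * t)) * hodeC - v * φ x * exp (I * (κ₀ - v * t)) * I_sq

-- `μ(t)^{-1/2} e^{i α(t) x²}` with `μ(t) = e^{3 - 3 cos t}`, `α(t) = sin(t)/4`.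
noncomputable def gaugeFactor (t x : ℝ) : ℂ :=
  exp (((3 / 2 * (Real.cos t - 1) : ℝ) : ℂ) + I * ((x ^ 2 / 4 * Real.sin t : ℝ) : ℂ))

lemma hasDerivAt_gaugeFactor_time (t x : ℝ) :
    HasDerivAt (fun s => gaugeFactor s x) (gaugeFactor t x *
      (((-(3 / 2) * Real.sin t : ℝ) : ℂ) + I * ((x ^ 2 / 4 * Real.cos t : ℝ) : ℂ))) t := by
  have hamp : HasDerivAt (fun s => 3 / 2 * (Real.cos s - 1)) (-(3 / 2) * Real.sin t) t :=
    (((Real.hasDerivAt_cos t).sub_const 1).const_mul (3 / 2)).congr_deriv (by ring)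
  have hphase : HasDerivAt (fun s => x ^ 2 / 4 * Real.sin s) (x ^ 2 / 4 * Real.cos t) t :=
    (Real.hasDerivAt_sin t).const_mul _
  exact (hamp.ofReal_comp.add (hphase.ofReal_comp.const_mul I)).cexp

lemma hasDerivAt_gaugeFactor_space (t y : ℝ) :
    HasDerivAt (gaugeFactor t) (gaugeFactor t y * (I * ((y / 2 * Real.sin t : ℝ) : ℂ))) y := by
  have hphase : HasDerivAt (fun y => y ^ 2 / 4 * Real.sin t) (y / 2 * Real.sin t) y :=
    (((hasDerivAt_pow 2 y).div_const 4).mul_const _).congr_deriv (by ring)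
  exact (((hasDerivAt_const y _).add (hphase.ofReal_comp.const_mul I)).cexp).congr_deriv
    (by rw [zero_add]; rfl)

lemma gaugeFactor_norm_sq (t x : ℝ) :
    Real.exp (3 - 3 * Real.cos t) * ‖gaugeFactor t x‖ ^ 2 = 1 := by
  rw [gaugeFactor, norm_exp, add_re, I_mul_re, ofReal_re, ofReal_im, neg_zero, add_zero,
    ← Real.exp_nat_mul, ← Real.exp_add, Real.exp_eq_one_iff]
  push_cast
  ring

theorem sch1_of_isFocusingNLSSolutionAt {u ψ : ℝ → ℝ → ℂ} {t x : ℝ}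
    (hψ : ψ = fun t x => gaugeFactor t x * u t x) (hu : IsFocusingNLSSolutionAt u t x) :
    I * deriv (fun t' => ψ t' x) t =
        -deriv (fun x' => deriv (fun x'' => ψ t x'') x') x
        + ((x ^ 2 / 4 * ((Real.sin t) ^ 2 - Real.cos t) : ℝ) : ℂ) * ψ t x
        + I * (x : ℂ) * (Real.sin t : ℂ) * deriv (fun x' => ψ t x') x
        - I * (Real.sin t : ℂ) * ψ t x
        - 3 * ((Real.exp (3 - 3 * Real.cos t) : ℝ) : ℂ) *
          ((‖ψ t x‖ ^ 2 : ℝ) : ℂ) * ψ t x := by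
  obtain ⟨ut, ux, uxx, hut, hux, huxx, hnls⟩ := hu
  subst hψ
  beta_reduce
  have hψt : HasDerivAt (fun s => gaugeFactor s x * u s x) _ t :=
    (hasDerivAt_gaugeFactor_time t x).mul hut
  have hψx (y : ℝ) : HasDerivAt (fun y => gaugeFactor t y * u t y)
      (gaugeFactor t y * (I * ((y / 2 * Real.sin t : ℝ) : ℂ)) * u t y + gaugeFactor t y * ux y) y :=
    (hasDerivAt_gaugeFactor_space t y).mul (hux y)
  have hlin : HasDerivAt (fun y => I * ((y / 2 * Real.sin t : ℝ) : ℂ))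
      (I * ((Real.sin t / 2 : ℝ) : ℂ)) x :=
    ((((hasDerivAt_id x).div_const 2).mul_const (Real.sin t)).congr_deriv
      (by simp only [one_div, inv_mul_eq_div])).ofReal_comp.const_mul I
  have hψxx : HasDerivAt (fun y => gaugeFactor t y * (I * ((y / 2 * Real.sin t : ℝ) : ℂ)) * u t y
      + gaugeFactor t y * ux y) _ x :=
    (((hasDerivAt_gaugeFactor_space t x).mul hlin).mul (hux x)).add
      ((hasDerivAt_gaugeFactor_space t x).mul huxx)
  have hnorm : ((Real.exp (3 - 3 * Real.cos t) : ℝ) : ℂ) *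
      ((‖gaugeFactor t x * u t x‖ ^ 2 : ℝ) : ℂ) = ((‖u t x‖ ^ 2 : ℝ) : ℂ) := by
    rw [← ofReal_mul, norm_mul, mul_pow, ← mul_assoc, gaugeFactor_norm_sq, one_mul]
  rw [hψt.deriv, funext fun y => (hψx y).deriv, hψxx.deriv]
  simp only [Pi.mul_apply]
  push_cast at hnorm hnls ⊢
  linear_combination gaugeFactor t x * hnls + 3 * gaugeFactor t x * u t x * hnorm
    + gaugeFactor t x * u t x * x ^ 2 * (cos t - sin t ^ 2) / 4 * I_sq

/-- The periodic solution (Periodic1) of Section 4.4 for equation (sch1) with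
`d(t) = sin t` and `h(t) = -3e^{3-3cos t}`. -/
theorem stmt17
    (v κ₀ : ℝ) (hv : v < 0)
    (ψ : ℝ → ℝ → ℂ)
    (hψ : ∀ t x : ℝ, ψ t x =
      ((Real.sqrt (-2 * v / 3) / Real.cosh (Real.sqrt (-v) * x) : ℝ) : ℂ) *
      Complex.exp (((3 / 2 * (Real.cos t - 1) : ℝ) : ℂ) +
        Complex.I * ((x ^ 2 / 4 * Real.sin t + κ₀ - v * t : ℝ) : ℂ))) :
    ∀ t x : ℝ,
      Complex.I * deriv (fun t' => ψ t' x) t =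
        -deriv (fun x' => deriv (fun x'' => ψ t x'') x') x
        + ((x ^ 2 / 4 * ((Real.sin t) ^ 2 - Real.cos t) : ℝ) : ℂ) * ψ t x
        + Complex.I * (x : ℂ) * (Real.sin t : ℂ) * deriv (fun x' => ψ t x') x
        - Complex.I * (Real.sin t : ℂ) * ψ t x
        - 3 * ((Real.exp (3 - 3 * Real.cos t) : ℝ) : ℂ) *
          ((‖ψ t x‖ ^ 2 : ℝ) : ℂ) * ψ t x := by
  intro t x
  set a := Real.sqrt (-2 * v / 3)
  set b := Real.sqrt (-v)
  have ha : a ^ 2 = -2 * v / 3 := Real.sq_sqrt (by linarith)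
  have hb : b ^ 2 = -v := Real.sq_sqrt (by linarith)
  have hgauge : ψ = fun t x => gaugeFactor t x *
      (((a / Real.cosh (b * x) : ℝ) : ℂ) * exp (I * ((κ₀ - v * t : ℝ) : ℂ))) := by
    funext t x
    rw [hψ, gaugeFactor, mul_left_comm, ← exp_add]
    congr 2
    push_cast
    ring
  exact sch1_of_isFocusingNLSSolutionAt hgauge <|
    isFocusingNLSSolutionAt_standingWave (hasDerivAt_div_cosh a b)
      (hasDerivAt_sinh_div_cosh_sq a b x) (div_cosh_ode ha hb x)
end

section
/- Fix real parameters v < 0 and κ₀. Then the function ψ : ℝ × ℝ → ℂ defined by ψ(t,x) = sqrt(−2v/3) · sech( sqrt(−v)·x ) · exp( i·( (x²/4)·sin(t) + κ₀ − v·t ) − t² ) satisfies at every (t,x) ∈ ℝ × ℝ the equation i·ψ_t = −ψ_xx + (x²/4)·(sin²(t) − cos(t))·ψ + i·x·sin(t)·ψ_x − i·((4t − sin(t))/2)·ψ − 3·e^{2t²}·|ψ|²·ψ. -/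
/-!
The bright-soliton profile `φ(x) = √(-2v/3) sech(√(-v) x)` solves the stationary equation
`φ'' = -v φ - 3 |φ|² φ`. For any solution `φ` of it, `ψ = φ · E` with
`E(t, x) = exp(i (x² sin t / 4 + κ₀ - v t) - t²)` solves the gauged equation: the chirp
`x² sin t / 4` produces the potential and drift terms, the factor `e^{-t²}` the dissipation, and
the loss `|E|² = e^{-2t²}` in the cubic term is exactly compensated by the weight `e^{2t²}`.
-/

lemma hasDerivAt_div_cosh_mul (c s y : ℝ) :
    HasDerivAt (fun y => c / Real.cosh (s * y))
      (-(c * s) * (Real.sinh (s * y) / Real.cosh (s * y) ^ 2)) y := by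
  refine ((hasDerivAt_const y c).div (hasDerivAt_const_mul s).cosh
    (Real.cosh_pos _).ne').congr_deriv ?_
  ring

lemma hasDerivAt_sinh_div_cosh_sq_mul (s y : ℝ) :
    HasDerivAt (fun y => Real.sinh (s * y) / Real.cosh (s * y) ^ 2)
      (s * (2 / Real.cosh (s * y) ^ 3 - 1 / Real.cosh (s * y))) y := by
  have hlin : HasDerivAt (fun y => s * y) s y := hasDerivAt_const_mul s
  have hpos := Real.cosh_pos (s * y)
  refine (hlin.sinh.div (hlin.cosh.fun_pow 2) (by positivity)).congr_deriv ?_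
  field_simp
  linear_combination (2 * s * Real.cosh (s * y)) * Real.cosh_sq (s * y)

lemma hasDerivAt_deriv_sech_profile {c s : ℝ} (h : 3 * c ^ 2 = 2 * s ^ 2) (y : ℝ) :
    HasDerivAt (fun y => -(c * s) * (Real.sinh (s * y) / Real.cosh (s * y) ^ 2))
      (s ^ 2 * (c / Real.cosh (s * y)) - 3 * (c / Real.cosh (s * y)) ^ 3) y := by
  have hpos := Real.cosh_pos (s * y)
  refine ((hasDerivAt_sinh_div_cosh_sq_mul s y).const_mul (-(c * s))).congr_deriv ?_
  field_simp
  linear_combination c * h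

noncomputable def fastDecayPhase (v κ₀ t x : ℝ) : ℂ :=
  Complex.exp (Complex.I * ((x ^ 2 / 4 * Real.sin t + κ₀ - v * t : ℝ) : ℂ) - ((t ^ 2 : ℝ) : ℂ))

lemma hasDerivAt_fastDecayPhase_time (v κ₀ t x : ℝ) :
    HasDerivAt (fun t => fastDecayPhase v κ₀ t x)
      (fastDecayPhase v κ₀ t x *
        (Complex.I * ((x ^ 2 / 4 * Real.cos t - v : ℝ) : ℂ) - ((2 * t : ℝ) : ℂ))) t := by
  have harg : HasDerivAt (fun t => x ^ 2 / 4 * Real.sin t + κ₀ - v * t)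
      (x ^ 2 / 4 * Real.cos t - v) t :=
    (((Real.hasDerivAt_sin t).const_mul _).add_const κ₀).sub ((hasDerivAt_id t).const_mul v)
      |>.congr_deriv (by ring)
  have hsq : HasDerivAt (fun t : ℝ => t ^ 2) (2 * t) t := by
    simpa using hasDerivAt_pow 2 t
  exact ((harg.ofReal_comp.const_mul Complex.I).sub hsq.ofReal_comp).cexp

lemma hasDerivAt_fastDecayPhase_space (v κ₀ t x : ℝ) :
    HasDerivAt (fun x => fastDecayPhase v κ₀ t x)
      (fastDecayPhase v κ₀ t x * (Complex.I * ((x / 2 * Real.sin t : ℝ) : ℂ))) x := by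
  have harg : HasDerivAt (fun x => x ^ 2 / 4 * Real.sin t + κ₀ - v * t) (x / 2 * Real.sin t) x :=
    ((((hasDerivAt_pow 2 x).div_const 4).mul_const _).add_const κ₀).sub_const _
      |>.congr_deriv (by ring)
  exact ((harg.ofReal_comp.const_mul Complex.I).sub_const _).cexp

lemma norm_fastDecayPhase (v κ₀ t x : ℝ) : ‖fastDecayPhase v κ₀ t x‖ = Real.exp (-t ^ 2) := by
  rw [fastDecayPhase, Complex.norm_exp, Complex.sub_re, Complex.I_mul_re, Complex.ofReal_im,
    Complex.ofReal_re, neg_zero, zero_sub]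

/-- Equation (sch1) at `(t, x)`, with `c(t) = -sin t`, `d(t) = (4t - sin t)/2`, `h(t) = -3e^{2t²}`. -/
def SolvesGaugedNLSAt (ψ : ℝ → ℝ → ℂ) (t x : ℝ) : Prop :=
  Complex.I * deriv (fun t' => ψ t' x) t =
    -deriv (fun x' => deriv (fun x'' => ψ t x'') x') x
    + ((x ^ 2 / 4 * ((Real.sin t) ^ 2 - Real.cos t) : ℝ) : ℂ) * ψ t x
    + Complex.I * (x : ℂ) * (Real.sin t : ℂ) * deriv (fun x' => ψ t x') x
    - Complex.I * (((4 * t - Real.sin t) / 2 : ℝ) : ℂ) * ψ t x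
    - 3 * ((Real.exp (2 * t ^ 2) : ℝ) : ℂ) * ((‖ψ t x‖ ^ 2 : ℝ) : ℂ) * ψ t x

theorem solvesGaugedNLSAt_mul_fastDecayPhase {v : ℝ} (κ₀ : ℝ) {φ φ' : ℝ → ℂ} {x : ℝ}
    (hφ : ∀ y, HasDerivAt φ (φ' y) y)
    (hφ' : HasDerivAt φ' (-(v : ℂ) * φ x - 3 * ((‖φ x‖ ^ 2 : ℝ) : ℂ) * φ x) x) (t : ℝ) :
    SolvesGaugedNLSAt (fun t x => φ x * fastDecayPhase v κ₀ t x) t x := by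
  set E := fastDecayPhase v κ₀
  set a : ℝ → ℂ := fun y => Complex.I * ((y / 2 * Real.sin t : ℝ) : ℂ)
  have ha : HasDerivAt a (Complex.I * ((Real.sin t / 2 : ℝ) : ℂ)) x :=
    ((((hasDerivAt_id x).div_const 2).mul_const _).congr_deriv (by ring)).ofReal_comp.const_mul _
  have hψx (y : ℝ) : HasDerivAt (fun y => φ y * E t y) (φ' y * E t y + φ y * (E t y * a y)) y :=
    (hφ y).mul (hasDerivAt_fastDecayPhase_space v κ₀ t y)
  have hψxx : HasDerivAt (fun y => φ' y * E t y + φ y * (E t y * a y)) _ x :=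
    (hφ'.mul (hasDerivAt_fastDecayPhase_space v κ₀ t x)).add
      ((hφ x).mul ((hasDerivAt_fastDecayPhase_space v κ₀ t x).mul ha))
  have hψt := (hasDerivAt_fastDecayPhase_time v κ₀ t x).const_mul (φ x)
  have hnorm : ((Real.exp (2 * t ^ 2) : ℝ) : ℂ) * ((‖φ x * E t x‖ ^ 2 : ℝ) : ℂ)
      = ((‖φ x‖ ^ 2 : ℝ) : ℂ) := by
    rw [← Complex.ofReal_mul, norm_mul, norm_fastDecayPhase, mul_pow, ← Real.exp_nat_mul,
      ← mul_assoc, mul_comm (Real.exp _), mul_assoc, ← Real.exp_add]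
    norm_num
  unfold SolvesGaugedNLSAt
  rw [hψt.deriv, funext fun y => (hψx y).deriv, hψxx.deriv]
  simp only [a, E] at hnorm ⊢
  push_cast at hnorm ⊢
  linear_combination (3 * φ x * fastDecayPhase v κ₀ t x) * hnorm
    + φ x * fastDecayPhase v κ₀ t x * ((x : ℂ) ^ 2 / 4 * (Complex.cos t - Complex.sin t ^ 2) - v)
      * Complex.I_sq

/-- The fast-decaying solution (FastDecay) of Section 4.4 for equation (sch1) with
`d(t) = (4t - sin t)/2` and `h(t) = -3e^{2t²}`. -/
theorem stmt18
    (v κ₀ : ℝ) (hv : v < 0)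
    (ψ : ℝ → ℝ → ℂ)
    (hψ : ∀ t x : ℝ, ψ t x =
      ((Real.sqrt (-2 * v / 3) / Real.cosh (Real.sqrt (-v) * x) : ℝ) : ℂ) *
      Complex.exp (Complex.I * ((x ^ 2 / 4 * Real.sin t + κ₀ - v * t : ℝ) : ℂ)
        - ((t ^ 2 : ℝ) : ℂ))) :
    ∀ t x : ℝ,
      Complex.I * deriv (fun t' => ψ t' x) t =
        -deriv (fun x' => deriv (fun x'' => ψ t x'') x') x
        + ((x ^ 2 / 4 * ((Real.sin t) ^ 2 - Real.cos t) : ℝ) : ℂ) * ψ t x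
        + Complex.I * (x : ℂ) * (Real.sin t : ℂ) * deriv (fun x' => ψ t x') x
        - Complex.I * (((4 * t - Real.sin t) / 2 : ℝ) : ℂ) * ψ t x
        - 3 * ((Real.exp (2 * t ^ 2) : ℝ) : ℂ) *
          ((‖ψ t x‖ ^ 2 : ℝ) : ℂ) * ψ t x := by
  intro t x
  set s := Real.sqrt (-v)
  set c := Real.sqrt (-2 * v / 3)
  have hs : s ^ 2 = -v := Real.sq_sqrt (by linarith)
  have hc : 3 * c ^ 2 = 2 * s ^ 2 := by
    rw [Real.sq_sqrt (by linarith), hs]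
    ring
  obtain rfl : ψ = fun t x => ((c / Real.cosh (s * x) : ℝ) : ℂ) * fastDecayPhase v κ₀ t x :=
    funext fun t => funext (hψ t)
  refine solvesGaugedNLSAt_mul_fastDecayPhase κ₀
    (fun y => (hasDerivAt_div_cosh_mul c s y).ofReal_comp) ?_ t
  refine (hasDerivAt_deriv_sech_profile hc x).ofReal_comp.congr_deriv ?_
  rw [Complex.norm_real, Real.norm_eq_abs, sq_abs, hs]
  push_cast
  ring
end
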